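/- arXiv:1402.3860 — 4 statements merged into one kernel-verified Lean document; each statement's English description precedes it below -/
import Mathlib

section
/- A finitely generated nilpotent group in which every cyclic subgroup is undistorted is virtually abelian. -/
noncomputable def WordLength {G : Type*} [Group G] (S : Set G) (g : G) : ℕ :=
  sInf {n : ℕ | ∃ l : List G, l.length = n ∧ (∀ x ∈ l, x ∈ S ∨ x⁻¹ ∈ S) ∧ l.prod = g}

namespace WLAux
open Subgroup
variable {G : Type*} [Group G] {S : Set G}
open scoped commutatorElement


theorem exists_word (hS : Subgroup.closure S = ⊤) (g : G) :
    ∃ l : List G, (∀ x ∈ l, x ∈ S ∨ x⁻¹ ∈ S) ∧ l.prod = g := by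
  have hg : g ∈ Subgroup.closure S := hS ▸ Subgroup.mem_top g
  induction hg using Subgroup.closure_induction with
  | mem x hx => exact ⟨[x], by simpa using Or.inl hx, by simp⟩
  | one => exact ⟨[], by simp, by simp⟩
  | mul x y _ _ hx hy =>
      obtain ⟨l₁, h₁, p₁⟩ := hx
      obtain ⟨l₂, h₂, p₂⟩ := hy
      exact ⟨l₁ ++ l₂, by
        intro z hz
        rcases List.mem_append.1 hz with h | h
        · exact h₁ z h
        · exact h₂ z h, by simp [p₁, p₂]⟩
  | inv x _ hx =>
      obtain ⟨l, h, p⟩ := hx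
      refine ⟨(l.map (·⁻¹)).reverse, ?_, ?_⟩
      · intro z hz
        simp only [List.mem_reverse, List.mem_map] at hz
        obtain ⟨y, hy, rfl⟩ := hz
        rcases h y hy with h' | h'
        · exact Or.inr (by simpa using h')
        · exact Or.inl h'
      · rw [List.prod_reverse_noncomm]
        simp [p]

theorem wl_spec (hS : Subgroup.closure S = ⊤) (g : G) :
    ∃ l : List G, l.length = WordLength S g ∧ (∀ x ∈ l, x ∈ S ∨ x⁻¹ ∈ S) ∧ l.prod = g := by
  have hne : {n : ℕ | ∃ l : List G, l.length = n ∧ (∀ x ∈ l, x ∈ S ∨ x⁻¹ ∈ S) ∧ l.prod = g}.Nonempty := by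
    obtain ⟨l, h, p⟩ := exists_word hS g
    exact ⟨l.length, l, rfl, h, p⟩
  exact Nat.sInf_mem hne

theorem wl_le {g : G} {l : List G} (h : ∀ x ∈ l, x ∈ S ∨ x⁻¹ ∈ S) (p : l.prod = g) :
    WordLength S g ≤ l.length :=
  Nat.sInf_le ⟨l, rfl, h, p⟩

theorem wl_mul (hS : Subgroup.closure S = ⊤) (a b : G) :
    WordLength S (a * b) ≤ WordLength S a + WordLength S b := by
  obtain ⟨l₁, e₁, h₁, p₁⟩ := wl_spec hS a
  obtain ⟨l₂, e₂, h₂, p₂⟩ := wl_spec hS b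
  have := wl_le (S := S) (g := a * b) (l := l₁ ++ l₂) ?_ (by simp [p₁, p₂])
  · simpa [e₁, e₂] using this
  · intro z hz
    rcases List.mem_append.1 hz with h | h
    · exact h₁ z h
    · exact h₂ z h

theorem wl_inv (hS : Subgroup.closure S = ⊤) (a : G) :
    WordLength S a⁻¹ ≤ WordLength S a := by
  obtain ⟨l, e, h, p⟩ := wl_spec hS a
  have := wl_le (S := S) (g := a⁻¹) (l := (l.map (·⁻¹)).reverse) ?_ ?_
  · simpa [e] using this
  · intro z hz
    simp only [List.mem_reverse, List.mem_map] at hz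
    obtain ⟨y, hy, rfl⟩ := hz
    rcases h y hy with h' | h'
    · exact Or.inr (by simpa using h')
    · exact Or.inl h'
  · rw [List.prod_reverse_noncomm]; simp [p]

theorem wl_pow (hS : Subgroup.closure S = ⊤) (a : G) (n : ℕ) :
    WordLength S (a ^ n) ≤ n * WordLength S a := by
  induction n with
  | zero => simp [show WordLength S 1 = 0 from Nat.le_zero.1 (wl_le (l := []) (by simp) (by simp))]
  | succ n ih =>
      calc WordLength S (a ^ (n+1)) = WordLength S (a ^ n * a) := by rw [pow_succ]
        _ ≤ WordLength S (a ^ n) + WordLength S a := wl_mul hS _ _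
        _ ≤ n * WordLength S a + WordLength S a := by omega
        _ = (n+1) * WordLength S a := by ring



theorem pow_mul_comm_aux {x y z : G} (hz : z = ⁅x, y⁆) (hzx : Commute z x) :
    ∀ n : ℕ, x ^ n * y = z ^ n * (y * x ^ n) := by
  intro n
  induction n with
  | zero => simp
  | succ n ih =>
      have hxy : x * y = z * (y * x) := by
        rw [hz]; group
      calc x ^ (n+1) * y = x * (x ^ n * y) := by rw [pow_succ']; group
        _ = x * (z ^ n * (y * x ^ n)) := by rw [ih]
        _ = z ^ n * (x * y * x ^ n) := by
            rw [← mul_assoc, ← (hzx.pow_left n).eq]; group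
        _ = z ^ n * (z * (y * x) * x ^ n) := by rw [hxy]
        _ = z ^ (n+1) * (y * x ^ (n+1)) := by rw [pow_succ]; group

theorem pow_mul_pow_comm_aux {x y z : G} (hz : z = ⁅x, y⁆) (hzx : Commute z x)
    (hzy : Commute z y) (n : ℕ) : ∀ m : ℕ, x ^ n * y ^ m = z ^ (n * m) * (y ^ m * x ^ n) := by
  intro m
  induction m with
  | zero => simp
  | succ m ih =>
      have key : x ^ n * y = z ^ n * (y * x ^ n) := pow_mul_comm_aux hz hzx n
      calc x ^ n * y ^ (m+1) = (x ^ n * y ^ m) * y := by rw [pow_succ]; group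
        _ = z ^ (n*m) * (y ^ m * (x ^ n * y)) := by rw [ih]; group
        _ = z ^ (n*m) * (y ^ m * (z ^ n * (y * x ^ n))) := by rw [key]
        _ = z ^ (n*m) * (z ^ n * (y ^ m * (y * x ^ n))) := by
            rw [← mul_assoc (y^m), ← ((hzy.pow_right m).pow_left n).eq]; group
        _ = z ^ (n*(m+1)) * (y ^ (m+1) * x ^ n) := by
            rw [show n*(m+1) = n*m + n by ring, pow_add, pow_succ']; group

theorem commutator_pow_pow {x y z : G} (hz : z = ⁅x, y⁆) (hzx : Commute z x)
    (hzy : Commute z y) (n : ℕ) : ⁅x ^ n, y ^ n⁆ = z ^ (n * n) := by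
  have h := pow_mul_pow_comm_aux hz hzx hzy n n
  rw [commutatorElement_def]
  rw [h]
  group

theorem torsion_of_commutator_commute (hS : Subgroup.closure S = ⊤)
    (hyp : ∀ g : G, ¬IsOfFinOrder g →
      ∃ C : ℝ, 0 < C ∧ ∀ k : ℤ, C * |(k : ℝ)| ≤ (WordLength S (g ^ k) : ℝ))
    (x y : G) (hzx : Commute ⁅x, y⁆ x) (hzy : Commute ⁅x, y⁆ y) :
    IsOfFinOrder ⁅x, y⁆ := by
  by_contra hfin
  obtain ⟨C, hC, hb⟩ := hyp _ hfin
  set z := ⁅x, y⁆ with hz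
  set A : ℕ := 2 * WordLength S x + 2 * WordLength S y with hA
  have key : ∀ n : ℕ, C * (n * n : ℕ) ≤ (n * A : ℕ) := by
    intro n
    have h1 := hb ((n : ℤ) * n)
    have hzn : z ^ ((n : ℤ) * n) = z ^ (n * n) := by
      rw [show ((n : ℤ) * n) = ((n * n : ℕ) : ℤ) by push_cast; ring, zpow_natCast]
    rw [hzn, ← commutator_pow_pow hz hzx hzy n] at h1
    have h2 : WordLength S ⁅x ^ n, y ^ n⁆ ≤ n * A := by
      have e : ⁅x ^ n, y ^ n⁆ = x ^ n * y ^ n * (x ^ n)⁻¹ * (y ^ n)⁻¹ := commutatorElement_def _ _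
      calc WordLength S ⁅x ^ n, y ^ n⁆
          ≤ WordLength S (x ^ n * y ^ n * (x ^ n)⁻¹) + WordLength S (y ^ n)⁻¹ := by
            rw [e]; exact wl_mul hS _ _
        _ ≤ WordLength S (x ^ n * y ^ n) + WordLength S (x ^ n)⁻¹ + WordLength S (y ^ n)⁻¹ :=
            add_le_add_left (wl_mul hS _ _) _
        _ ≤ (WordLength S (x ^ n) + WordLength S (y ^ n)) + WordLength S (x ^ n)
              + WordLength S (y ^ n) := by
            have := wl_mul hS (x ^ n) (y ^ n)
            have h3 := wl_inv hS (x ^ n)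
            have h4 := wl_inv hS (y ^ n)
            omega
        _ ≤ n * A := by
            have h5 := wl_pow hS x n
            have h6 := wl_pow hS y n
            rw [hA]; push_cast; nlinarith [h5, h6]
    calc C * ((n * n : ℕ) : ℝ) = C * |(((n : ℤ) * n : ℤ) : ℝ)| := by
          push_cast; rw [abs_of_nonneg (by positivity)]
      _ ≤ (WordLength S ⁅x ^ n, y ^ n⁆ : ℝ) := h1
      _ ≤ ((n * A : ℕ) : ℝ) := by exact_mod_cast Nat.cast_le.mpr h2
  -- contradiction: C * n ≤ A for all n ≥ 1
  obtain ⟨n, hn⟩ := exists_nat_gt ((A : ℝ) / C)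
  have hn1 : 1 ≤ n := by
    by_contra h
    interval_cases n
    · simp at hn; nlinarith [div_nonneg (Nat.cast_nonneg (α := ℝ) A) hC.le]
  have h := key n
  push_cast at h
  have hnp : (0:ℝ) < n := by exact_mod_cast hn1
  have : C * n ≤ A := by nlinarith
  have h7 : (A : ℝ) < n * C := (div_lt_iff₀ hC).mp hn
  nlinarith


open Subgroup

theorem lcs_succ' (G : Type*) [Group G] (n : ℕ) :
    (⊤ : Subgroup G).lowerCentralSeries (n + 1) = ⁅(⊤ : Subgroup G).lowerCentralSeries n, ⊤⁆ := rfl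

theorem lcs_map_surjective {Q : Type*} [Group Q] (π : G →* Q) (hπ : Function.Surjective π)
    (n : ℕ) : ((⊤ : Subgroup G).lowerCentralSeries n).map π = (⊤ : Subgroup Q).lowerCentralSeries n := by
  induction n with
  | zero => simpa using Subgroup.map_top_of_surjective π hπ
  | succ n ih =>
      rw [lcs_succ', lcs_succ', Subgroup.map_commutator, ih,
        Subgroup.map_top_of_surjective π hπ]

/-- commutator expansion identities -/
theorem comm_mul_right (a b c : G) : ⁅a, b * c⁆ = ⁅a, b⁆ * (b * ⁅a, c⁆ * b⁻¹) := by group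
theorem comm_inv_right (a b : G) : ⁅a, b⁻¹⁆ = b⁻¹ * ⁅a, b⁆⁻¹ * b := by group
theorem comm_mul_left (a b c : G) : ⁅a * b, c⁆ = a * ⁅b, c⁆ * a⁻¹ * ⁅a, c⁆ := by group
theorem comm_inv_left (a b : G) : ⁅a⁻¹, b⁆ = a⁻¹ * ⁅a, b⁆⁻¹ * a := by group

theorem weight_lemma (S : Finset G) (hS : Subgroup.closure (S : Set G) = ⊤) (n : ℕ) :
    ∃ T : Finset G, (↑T : Set G) ⊆ (⊤ : Subgroup G).lowerCentralSeries n ∧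
      (1 ≤ n → ∀ t ∈ T, ∃ a b : G, t = ⁅a, b⁆) ∧
      (⊤ : Subgroup G).lowerCentralSeries n ≤ Subgroup.closure (↑T : Set G) ⊔ (⊤ : Subgroup G).lowerCentralSeries (n + 1) := by
  induction n with
  | zero =>
      exact ⟨S, by simp [Subgroup.lowerCentralSeries_zero], by simp, by
        rw [hS]; exact le_trans le_top le_sup_left⟩
  | succ n ih =>
      obtain ⟨T, hTsub, _hTcomm, hTgen⟩ := ih
      classical
      refine ⟨(T ×ˢ S).image (fun p => ⁅p.1, p.2⁆), ?_, ?_, ?_⟩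
      · intro t ht
        simp only [Finset.coe_image, Set.mem_image, Finset.mem_coe, Finset.mem_product] at ht
        obtain ⟨⟨a, b⟩, ⟨ha, _⟩, rfl⟩ := ht
        rw [lcs_succ']
        exact commutator_mem_commutator (hTsub ha) (mem_top _)
      · intro _ t ht
        simp only [Finset.mem_image, Finset.mem_product] at ht
        obtain ⟨⟨a, b⟩, _, rfl⟩ := ht
        exact ⟨a, b, rfl⟩
      · -- main work in the quotient by (⊤ : Subgroup G).lowerCentralSeries (n+2)
        set K := (⊤ : Subgroup G).lowerCentralSeries (n + 2) with hK
        set Q := G ⧸ K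
        set π : G →* Q := QuotientGroup.mk' K with hπdef
        have hπ : Function.Surjective π := QuotientGroup.mk_surjective
        have hker : π.ker = K := QuotientGroup.ker_mk' K
        -- the (n+1)-st term in Q is central
        have hQbot : (⊤ : Subgroup Q).lowerCentralSeries (n + 2) = ⊥ := by
          rw [← lcs_map_surjective π hπ, Subgroup.map_eq_bot_iff, hker]
        have hcent : ∀ w ∈ (⊤ : Subgroup Q).lowerCentralSeries (n + 1), ∀ g : Q, Commute w g := by
          intro w hw g
          have h1 : ⁅(⊤ : Subgroup Q).lowerCentralSeries (n+1), (⊤ : Subgroup Q)⁆ = ⊥ := by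
            rw [← lcs_succ']; exact hQbot
          have h2 := (Subgroup.commutator_eq_bot_iff_le_centralizer).mp h1 hw
          exact ((Subgroup.mem_centralizer_iff.mp h2) g (mem_top _)).symm
        -- values of commutators with first entry in γ_n(Q) are central
        have hval : ∀ a ∈ (⊤ : Subgroup Q).lowerCentralSeries n, ∀ b g : Q, Commute ⁅a, b⁆ g := by
          intro a ha b g
          exact hcent _ (by rw [lcs_succ']; exact commutator_mem_commutator ha (mem_top _)) g
        set T' : Set Q := (fun p : G × G => ⁅π p.1, π p.2⁆) '' (↑T ×ˢ ↑S) with hT'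
        set R : Subgroup Q := Subgroup.closure T' with hR
        -- step 1: for a = π t with t ∈ T, all b : Q, ⁅a, b⁆ ∈ R
        have step1 : ∀ t ∈ T, ∀ b : Q, ⁅π t, b⁆ ∈ R := by
          intro t ht b
          have hb : b ∈ Subgroup.closure (π '' (S : Set G)) := by
            rw [← MonoidHom.map_closure, hS]
            exact ⟨b.exists_rep.choose, mem_top _, by
              exact b.exists_rep.choose_spec⟩
          have haQ : π t ∈ (⊤ : Subgroup Q).lowerCentralSeries n := by
            rw [← lcs_map_surjective π hπ]
            exact mem_map_of_mem π (hTsub ht)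
          induction hb using Subgroup.closure_induction with
          | mem s hs =>
              obtain ⟨s₀, hs₀, rfl⟩ := hs
              exact Subgroup.subset_closure ⟨(t, s₀), ⟨ht, hs₀⟩, rfl⟩
          | one => simpa using R.one_mem
          | mul b c _ _ hbR hcR =>
              rw [comm_mul_right]
              have e : b * ⁅π t, c⁆ * b⁻¹ = ⁅π t, c⁆ := by
                rw [← (hval _ haQ c b).eq]; group
              rw [e]
              exact R.mul_mem hbR hcR
          | inv b _ hbR =>
              rw [comm_inv_right]
              have e : b⁻¹ * ⁅π t, b⁆⁻¹ * b = ⁅π t, b⁆⁻¹ := by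
                rw [mul_assoc, (hval _ haQ b b).inv_left.eq]; group
              rw [e]
              exact R.inv_mem hbR
        -- step 2: for all a in γ_n(Q) and all b : Q, ⁅a, b⁆ ∈ R
        have hsubset : (π '' (T : Set G)) ∪ (((⊤ : Subgroup Q).lowerCentralSeries (n+1) : Subgroup Q) : Set Q)
            ⊆ ((⊤ : Subgroup Q).lowerCentralSeries n : Subgroup Q) := by
          rintro x (⟨t, ht, rfl⟩ | hx)
          · rw [← lcs_map_surjective π hπ]
            exact mem_map_of_mem π (hTsub ht)
          · exact Subgroup.lowerCentralSeries_antitone (S := ⊤) (Nat.le_succ n) hx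
        have hclle : Subgroup.closure ((π '' (T : Set G)) ∪
            (((⊤ : Subgroup Q).lowerCentralSeries (n+1) : Subgroup Q) : Set Q)) ≤ (⊤ : Subgroup Q).lowerCentralSeries n :=
          Subgroup.closure_le _ |>.mpr hsubset
        have step2 : ∀ a ∈ Subgroup.closure ((π '' (T : Set G)) ∪
            (((⊤ : Subgroup Q).lowerCentralSeries (n+1) : Subgroup Q) : Set Q)), ∀ b : Q, ⁅a, b⁆ ∈ R := by
          intro a ha
          induction ha using Subgroup.closure_induction with
          | mem x hx =>
              rcases hx with ⟨t, ht, rfl⟩ | hx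
              · exact step1 t ht
              · intro b
                exact (commutatorElement_eq_one_iff_commute.mpr (hcent x hx b)) ▸ R.one_mem
          | one => intro b; simpa using R.one_mem
          | mul x y hx hy hxR hyR =>
              intro b
              rw [comm_mul_left]
              have hyn : y ∈ (⊤ : Subgroup Q).lowerCentralSeries n := hclle hy
              have e : x * ⁅y, b⁆ * x⁻¹ = ⁅y, b⁆ := by
                rw [← (hval _ hyn b x).eq]; group
              rw [e]
              exact R.mul_mem (hyR b) (hxR b)
          | inv x hx hxR =>
              intro b
              rw [comm_inv_left]
              have hxn : x ∈ (⊤ : Subgroup Q).lowerCentralSeries n := hclle hx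
              have e : x⁻¹ * ⁅x, b⁆⁻¹ * x = ⁅x, b⁆⁻¹ := by
                rw [mul_assoc, (hval _ hxn b x).inv_left.eq]; group
              rw [e]
              exact R.inv_mem (hxR b)
        -- step 3: γ_{n+1}(Q) ≤ R
        have step3 : (⊤ : Subgroup Q).lowerCentralSeries (n + 1) ≤ R := by
          rw [lcs_succ', Subgroup.commutator_le]
          intro a ha b _
          apply step2
          · have h1 : (⊤ : Subgroup Q).lowerCentralSeries n ≤ Subgroup.closure ((π '' (T : Set G)) ∪
                (((⊤ : Subgroup Q).lowerCentralSeries (n+1) : Subgroup Q) : Set Q)) := by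
              rw [Subgroup.closure_union, Subgroup.closure_eq]
              calc (⊤ : Subgroup Q).lowerCentralSeries n = ((⊤ : Subgroup G).lowerCentralSeries n).map π :=
                    (lcs_map_surjective π hπ n).symm
                _ ≤ (Subgroup.closure (T : Set G) ⊔ (⊤ : Subgroup G).lowerCentralSeries (n+1)).map π :=
                    Subgroup.map_mono hTgen
                _ = Subgroup.closure (π '' (T : Set G)) ⊔ (⊤ : Subgroup Q).lowerCentralSeries (n+1) := by
                    rw [Subgroup.map_sup, MonoidHom.map_closure, lcs_map_surjective π hπ]
            exact h1 ha
        -- step 4: pull back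
        have hTQ : R = (Subgroup.closure ((↑((T ×ˢ S).image (fun p : G × G => ⁅p.1, p.2⁆))) :
            Set G)).map π := by
          rw [MonoidHom.map_closure, hR]
          congr 1
          ext q
          constructor
          · rintro ⟨⟨a, b⟩, ⟨ha, hb⟩, rfl⟩
            exact ⟨⁅a, b⁆, by
              simp only [Finset.coe_image, Set.mem_image, Finset.mem_coe, Finset.mem_product]
              exact ⟨⟨(a, b), ⟨ha, hb⟩, rfl⟩, by simp [map_commutatorElement]⟩⟩
          · rintro ⟨x, hx, rfl⟩
            simp only [Finset.coe_image, Set.mem_image, Finset.mem_coe,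
              Finset.mem_product] at hx
            obtain ⟨⟨a, b⟩, ⟨ha, hb⟩, rfl⟩ := hx
            exact ⟨(a, b), ⟨ha, hb⟩, by simp [map_commutatorElement]⟩
        intro g hg
        have hgQ : π g ∈ R := step3 (by
          rw [← lcs_map_surjective π hπ]; exact mem_map_of_mem π hg)
        rw [hTQ] at hgQ
        have : g ∈ ((Subgroup.closure ((↑((T ×ˢ S).image (fun p : G × G => ⁅p.1, p.2⁆))) :
            Set G)).map π).comap π := hgQ
        rw [Subgroup.comap_map_eq, hker] at this
        exact this

open Subgroup

/-- The subgroup of central torsion elements. -/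
def centralTorsion (G : Type*) [Group G] : Subgroup G where
  carrier := {g | g ∈ Subgroup.center G ∧ IsOfFinOrder g}
  one_mem' := ⟨Subgroup.one_mem _, IsOfFinOrder.one⟩
  mul_mem' := by
    rintro a b ⟨ha, hfa⟩ ⟨hb, hfb⟩
    refine ⟨Subgroup.mul_mem _ ha hb, ?_⟩
    have hc : Commute a b := (Subgroup.mem_center_iff.mp ha b).symm
    exact hc.isOfFinOrder_mul hfa hfb
  inv_mem' := by
    rintro a ⟨ha, hfa⟩
    exact ⟨Subgroup.inv_mem _ ha, hfa.inv⟩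

open scoped IsMulCommutative in
theorem finite_of_central_torsion_closure (T : Finset G)
    (hcent : ∀ t ∈ T, t ∈ Subgroup.center G) (htor : ∀ t ∈ T, IsOfFinOrder t) :
    Finite ↥(Subgroup.closure (T : Set G)) := by
  set K := Subgroup.closure (T : Set G) with hK
  have hle : K ≤ centralTorsion G := by
    rw [hK]
    apply Subgroup.closure_le _ |>.mpr
    intro t ht
    exact ⟨hcent t ht, htor t ht⟩
  have hcomm : IsMulCommutative K := by
    constructor
    constructor
    rintro ⟨a, ha⟩ ⟨b, hb⟩
    apply Subtype.ext
    exact ((Subgroup.mem_center_iff.mp (hle ha).1 b)).symm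
  haveI := hcomm
  haveI : Group.FG ↥K := by
    rw [Group.fg_iff_subgroup_fg]
    exact ⟨T, rfl⟩
  apply CommGroup.finite_of_fg_torsion
  intro x
  have : IsOfFinOrder (x : G) := (hle x.2).2
  rwa [← Submonoid.isOfFinOrder_coe]
  
theorem lift_word {Q : Type*} [Group Q] (π : G →* Q) (S : Set G) :
    ∀ lq : List Q, (∀ x ∈ lq, x ∈ (π '' S) ∨ x⁻¹ ∈ (π '' S)) →
      ∃ l : List G, l.length = lq.length ∧ (∀ x ∈ l, x ∈ S ∨ x⁻¹ ∈ S) ∧ π l.prod = lq.prod := by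
  intro lq
  induction lq with
  | nil => exact fun _ => ⟨[], rfl, by simp, by simp⟩
  | cons q lq ih =>
      intro h
      obtain ⟨l, hlen, hmem, hprod⟩ := ih (fun x hx => h x (List.mem_cons_of_mem q hx))
      rcases h q (List.mem_cons_self) with ⟨s, hs, rfl⟩ | ⟨s, hs, hq⟩
      · exact ⟨s :: l, by simp [hlen], by
          intro x hx
          rcases List.mem_cons.1 hx with rfl | hx
          · exact Or.inl hs
          · exact hmem x hx, by simp [hprod]⟩
      · refine ⟨s⁻¹ :: l, by simp [hlen], ?_, ?_⟩
        · intro x hx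
          rcases List.mem_cons.1 hx with rfl | hx
          · exact Or.inr (by simpa using hs)
          · exact hmem x hx
        · have : π s⁻¹ = q := by rw [map_inv, hq, inv_inv]
          simp [this, hprod]

/-- transfer of the undistortion hypothesis to a quotient by a finite normal subgroup -/
theorem hyp_transfer (S : Finset G) (hS : Subgroup.closure (S : Set G) = ⊤)
    (hyp : ∀ g : G, ¬IsOfFinOrder g →
      ∃ C : ℝ, 0 < C ∧ ∀ k : ℤ, C * |(k : ℝ)| ≤ (WordLength (S : Set G) (g ^ k) : ℝ))
    (K : Subgroup G) [K.Normal] (hKfin : Finite ↥K) :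
    ∀ q : G ⧸ K, ¬IsOfFinOrder q →
      ∃ C : ℝ, 0 < C ∧ ∀ k : ℤ,
        C * |(k : ℝ)| ≤ (WordLength ((QuotientGroup.mk' K) '' (S : Set G)) (q ^ k) : ℝ) := by
  classical
  set π : G →* G ⧸ K := QuotientGroup.mk' K with hπdef
  have hπ : Function.Surjective π := QuotientGroup.mk_surjective
  have hSQ : Subgroup.closure (π '' (S : Set G)) = ⊤ := by
    rw [← MonoidHom.map_closure, hS, Subgroup.map_top_of_surjective π hπ]
  have hKsetfin : (K : Set G).Finite := K.carrier.toFinite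
  set D : ℕ := hKsetfin.toFinset.sup (WordLength (S : Set G)) with hD
  have hDle : ∀ z ∈ K, WordLength (S : Set G) z ≤ D :=
    fun z hz => Finset.le_sup (by rwa [Set.Finite.mem_toFinset])
  intro q hq
  obtain ⟨g, rfl⟩ := hπ q
  have hg : ¬IsOfFinOrder g := fun h => hq (π.isOfFinOrder h)
  obtain ⟨C, hC, hb⟩ := hyp g hg
  refine ⟨C / (D + 1), by positivity, ?_⟩
  intro k
  set n : ℕ := WordLength (π '' (S : Set G)) (π g ^ k) with hn
  rcases eq_or_ne k 0 with rfl | hk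
  · simp
  -- main case
  have hbound : (WordLength (S : Set G) (g ^ k) : ℕ) ≤ n + D := by
    obtain ⟨lq, hlen, hmemq, hprodq⟩ := wl_spec hSQ (π g ^ k)
    obtain ⟨l, hlen2, hmem, hprod⟩ := lift_word π (S : Set G) lq hmemq
    have hker : (l.prod)⁻¹ * g ^ k ∈ K := by
      have : π ((l.prod)⁻¹ * g ^ k) = 1 := by
        rw [map_mul, map_inv, hprod, hprodq, map_zpow]
        group
      rwa [← QuotientGroup.ker_mk' K, MonoidHom.mem_ker]
    calc WordLength (S : Set G) (g ^ k)
        = WordLength (S : Set G) (l.prod * ((l.prod)⁻¹ * g ^ k)) := by group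
      _ ≤ WordLength (S : Set G) l.prod + WordLength (S : Set G) ((l.prod)⁻¹ * g ^ k) :=
          wl_mul hS _ _
      _ ≤ n + D := by
          have h1 : WordLength (S : Set G) l.prod ≤ n := by
            have := wl_le hmem rfl
            omega
          have h2 := hDle _ hker
          omega
  have h1n : 1 ≤ n := by
    by_contra hcon
    have hn0 : n = 0 := by omega
    obtain ⟨lq, hlen, hmemq, hprodq⟩ := wl_spec hSQ (π g ^ k)
    rw [← hn, hn0, List.length_eq_zero_iff] at hlen
    rw [hlen] at hprodq
    simp only [List.prod_nil] at hprodq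
    apply hq
    apply isOfFinOrder_iff_pow_eq_one.mpr
    refine ⟨k.natAbs, by omega, ?_⟩
    have : (π g) ^ (k.natAbs : ℤ) = 1 := by
      rcases Int.natAbs_eq k with he | he
    -- (πg)^k = 1
      · rw [← he, ← hprodq]
      · rw [show (k.natAbs : ℤ) = -k by omega, zpow_neg, ← hprodq]; simp
    rwa [zpow_natCast] at this
  have hCk := hb k
  rw [div_mul_eq_mul_div, div_le_iff₀ (by positivity : (0:ℝ) < (D:ℝ) + 1)]
  have hcast : (WordLength (S : Set G) (g ^ k) : ℝ) ≤ (n : ℝ) + D := by exact_mod_cast hbound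
  have h1nr : (1:ℝ) ≤ (n:ℝ) := by exact_mod_cast h1n
  have hk0 : (0:ℝ) ≤ |(k:ℝ)| := abs_nonneg _
  have hD0 : (0:ℝ) ≤ (D:ℝ) := Nat.cast_nonneg _
  nlinarith [hCk]
theorem preimage_finite {Q : Type*} [Group Q] (K : Subgroup G) [K.Normal]
    (hKfin : Finite ↥K) (π : G →* Q) (hker : π.ker = K) {A : Set Q} (hA : A.Finite) :
    (π ⁻¹' A).Finite := by
  have hfib : ∀ q : Q, (π ⁻¹' {q}).Finite := by
    intro q
    rcases Set.eq_empty_or_nonempty (π ⁻¹' {q}) with he | ⟨x₀, hx₀⟩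
    · rw [he]; exact Set.finite_empty
    · have hsub : π ⁻¹' {q} ⊆ (fun k => x₀ * k) '' (K : Set G) := by
        intro x hx
        refine ⟨x₀⁻¹ * x, ?_, by group⟩
        have : π (x₀⁻¹ * x) = 1 := by
          simp only [map_mul, map_inv]
          rw [Set.mem_preimage, Set.mem_singleton_iff] at hx hx₀
          rw [hx, hx₀]; group
        rw [← hker, SetLike.mem_coe, MonoidHom.mem_ker]
        exact this
      exact ((K.carrier.toFinite).image _).subset hsub
  have : π ⁻¹' A = ⋃ q ∈ A, π ⁻¹' {q} := by ext x; simp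
  rw [this]
  exact hA.biUnion (fun q _ => hfib q)

universe u

theorem commutator_finite_aux : ∀ (c : ℕ), ∀ {G : Type u} [Group G] [Group.IsNilpotent G],
    ∀ (S : Finset G), Subgroup.closure (S : Set G) = ⊤ →
    (∀ g : G, ¬IsOfFinOrder g →
      ∃ C : ℝ, 0 < C ∧ ∀ k : ℤ, C * |(k : ℝ)| ≤ (WordLength (S : Set G) (g ^ k) : ℝ)) →
    Group.nilpotencyClass G ≤ c →
    Finite ↥(commutator G) := by
  intro c
  induction c with
  | zero =>
      intro G _ _ S hS hyp hc
      have h0 : (⊤ : Subgroup G).lowerCentralSeries 0 = ⊥ :=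
        (Subgroup.lowerCentralSeries_eq_bot_iff_nilpotencyClass_le).mpr hc
      have : commutator G = ⊥ := by
        rw [eq_bot_iff, ← h0, Subgroup.lowerCentralSeries_zero]
        exact le_top
      rw [this]
      exact Finite.of_fintype _
  | succ c ih =>
      intro G _ _ S hS hyp hc
      by_cases hc1 : Group.nilpotencyClass G ≤ 1
      · have h1 : (⊤ : Subgroup G).lowerCentralSeries 1 = ⊥ :=
          (Subgroup.lowerCentralSeries_eq_bot_iff_nilpotencyClass_le).mpr hc1
        have : commutator G = ⊥ := by
          rw [commutator_def, eq_bot_iff, ← h1, lcs_succ', Subgroup.lowerCentralSeries_zero]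
        rw [this]
        exact Finite.of_fintype _
      push_neg at hc1
      set cl := Group.nilpotencyClass G with hcl
      have hcl2 : 2 ≤ cl := hc1
      have hclbot : (⊤ : Subgroup G).lowerCentralSeries cl = ⊥ := Subgroup.lowerCentralSeries_nilpotencyClass
      set K : Subgroup G := (⊤ : Subgroup G).lowerCentralSeries (cl - 1) with hKdef
      have hsucc : cl - 1 + 1 = cl := by omega
      have hKcomm : ⁅K, (⊤ : Subgroup G)⁆ = ⊥ := by
        rw [hKdef, ← lcs_succ', hsucc, hclbot]
      have hKcent : ∀ x ∈ K, x ∈ Subgroup.center G := by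
        intro x hx
        have := (Subgroup.commutator_eq_bot_iff_le_centralizer).mp hKcomm hx
        rw [Subgroup.mem_center_iff]
        intro g
        exact (Subgroup.mem_centralizer_iff.mp this g (by simp))
      -- K is finitely generated by central torsion elements, hence finite
      obtain ⟨T, hTsub, hTcomm, hTgen⟩ := weight_lemma S hS (cl - 1)
      have hKT : K = Subgroup.closure (T : Set G) := by
        apply le_antisymm
        · refine hTgen.trans ?_
          rw [hsucc, hclbot]
          simp
        · exact (Subgroup.closure_le _).mpr hTsub
      have hKfin : Finite ↥K := by
        rw [hKT]
        apply finite_of_central_torsion_closure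
        · intro t ht
          exact hKcent t (hTsub ht)
        · intro t ht
          obtain ⟨a, b, rfl⟩ := hTcomm (by omega) t ht
          have hcent := hKcent _ (hTsub ht)
          exact torsion_of_commutator_commute hS hyp a b
            ((Subgroup.mem_center_iff.mp hcent a).symm)
            ((Subgroup.mem_center_iff.mp hcent b).symm)
      -- pass to the quotient
      classical
      set Q := G ⧸ K with hQdef
      set π : G →* Q := QuotientGroup.mk' K with hπdef
      have hπ : Function.Surjective π := QuotientGroup.mk_surjective
      have hSQ : Subgroup.closure ((S.image π : Finset Q) : Set Q) = ⊤ := by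
        rw [Finset.coe_image, ← MonoidHom.map_closure, hS, Subgroup.map_top_of_surjective π hπ]
      have hclQ : Group.nilpotencyClass Q ≤ c := by
        have hbot : (⊤ : Subgroup Q).lowerCentralSeries (cl - 1) = ⊥ := by
          rw [← lcs_map_surjective π hπ, ← hKdef, Subgroup.map_eq_bot_iff,
            QuotientGroup.ker_mk']
        have := (Subgroup.lowerCentralSeries_eq_bot_iff_nilpotencyClass_le).mp hbot
        omega
      have hypQ := hyp_transfer S hS hyp K hKfin
      have hypQ' : ∀ q : Q, ¬IsOfFinOrder q →
          ∃ C : ℝ, 0 < C ∧ ∀ k : ℤ,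
            C * |(k : ℝ)| ≤ (WordLength ((S.image π : Finset Q) : Set Q) (q ^ k) : ℝ) := by
        rw [Finset.coe_image]
        exact hypQ
      have hfinQ : Finite ↥(commutator Q) := ih (S.image π) hSQ hypQ' hclQ
      -- pull back finiteness
      have hsub : (commutator G : Set G) ⊆ π ⁻¹' (commutator Q : Set Q) := by
        intro g hg
        have : π g ∈ (commutator G).map π := Subgroup.mem_map_of_mem π hg
        have hmap : (commutator G).map π ≤ commutator Q := by
          rw [commutator_def, Subgroup.map_commutator, commutator_def]
          exact Subgroup.commutator_mono le_top le_top
        exact hmap this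
      have hpre : (π ⁻¹' (commutator Q : Set Q)).Finite :=
        preimage_finite K hKfin π (QuotientGroup.ker_mk' K) (commutator Q).carrier.toFinite
      exact (hpre.subset hsub).to_subtype

end WLAux

/-- A finitely generated nilpotent group in which every (infinite) cyclic subgroup is
undistorted is virtually abelian. -/
theorem nilpotent_undistorted_virtually_abelian {G : Type*} [Group G] [Group.IsNilpotent G]
    (S : Finset G) (hS : Subgroup.closure (S : Set G) = ⊤)
    (hyp : ∀ g : G, ¬IsOfFinOrder g →
      ∃ C : ℝ, 0 < C ∧ ∀ k : ℤ, C * |(k : ℝ)| ≤ (WordLength (S : Set G) (g ^ k) : ℝ)) :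
    ∃ H : Subgroup G, IsMulCommutative H ∧ H.FiniteIndex := by
  have hfin : Finite ↥(commutator G) :=
    WLAux.commutator_finite_aux (Group.nilpotencyClass G) S hS hyp le_rfl
  haveI : Finite (commutatorSet G) := by
    have hsub : commutatorSet G ⊆ ((commutator G : Subgroup G) : Set G) := by
      rintro x ⟨a, b, rfl⟩
      exact Subgroup.commutator_mem_commutator (Subgroup.mem_top a) (Subgroup.mem_top b)
    exact (((commutator G).carrier.toFinite).subset hsub).to_subtype
  haveI : Group.FG G := Group.fg_iff.mpr ⟨(S : Set G), hS, S.finite_toSet⟩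
  exact ⟨Subgroup.center G, inferInstance, inferInstance⟩
end

section
/- In a finitely generated torsion-free nilpotent group G of class exactly 2, any nontrivial element z of the commutator subgroup generates a distorted cyclic subgroup: there is a constant C with |z^{n^2}| ≤ C·n for all n ≥ 1. -/
open scoped commutatorElement

section Aux

variable {G : Type*} [Group G] {S : Set G}

private lemma wl_le_of_list (l : List G) (hl : ∀ x ∈ l, x ∈ S ∨ x⁻¹ ∈ S) :
    WordLength S l.prod ≤ l.length :=
  Nat.sInf_le ⟨l, rfl, hl, rfl⟩

private lemma wl_exists (hS : Subgroup.closure S = ⊤) (g : G) :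
    ∃ l : List G, l.length = WordLength S g ∧ (∀ x ∈ l, x ∈ S ∨ x⁻¹ ∈ S) ∧ l.prod = g := by
  have hg : g ∈ (Subgroup.closure S).toSubmonoid := by rw [hS]; trivial
  rw [Subgroup.closure_toSubmonoid] at hg
  obtain ⟨l, hl, hprod⟩ := Submonoid.exists_list_of_mem_closure hg
  have hne : {n : ℕ | ∃ l : List G, l.length = n ∧ (∀ x ∈ l, x ∈ S ∨ x⁻¹ ∈ S) ∧ l.prod = g}.Nonempty := by
    refine ⟨l.length, l, rfl, ?_, hprod⟩
    intro x hx
    rcases hl x hx with h | h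
    · exact Or.inl h
    · exact Or.inr (by simpa using h)
  obtain ⟨l', h1, h2, h3⟩ := Nat.sInf_mem hne
  exact ⟨l', h1, h2, h3⟩

private lemma wl_mul (hS : Subgroup.closure S = ⊤) (g h : G) :
    WordLength S (g * h) ≤ WordLength S g + WordLength S h := by
  obtain ⟨l1, hl1, hm1, hp1⟩ := wl_exists hS g
  obtain ⟨l2, hl2, hm2, hp2⟩ := wl_exists hS h
  have := wl_le_of_list (S := S) (l1 ++ l2) (by
    intro x hx
    rcases List.mem_append.mp hx with h | h
    · exact hm1 x h
    · exact hm2 x h)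
  simpa [hp1, hp2, hl1, hl2] using this

private lemma wl_inv (hS : Subgroup.closure S = ⊤) (g : G) :
    WordLength S g⁻¹ ≤ WordLength S g := by
  obtain ⟨l, hl, hm, hp⟩ := wl_exists hS g
  have := wl_le_of_list (S := S) ((l.map fun x => x⁻¹).reverse) (by
    intro x hx
    simp only [List.mem_reverse, List.mem_map] at hx
    obtain ⟨y, hy, rfl⟩ := hx
    rcases hm y hy with h | h
    · exact Or.inr (by simpa using h)
    · exact Or.inl h)
  rw [← List.prod_inv_reverse, hp] at this
  simpa [hl] using this

private lemma wl_pow (hS : Subgroup.closure S = ⊤) (g : G) (n : ℕ) :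
    WordLength S (g ^ n) ≤ n * WordLength S g := by
  induction n with
  | zero => simp [show WordLength S (1 : G) ≤ 0 from wl_le_of_list ([] : List G) (by simp)]
  | succ n ih =>
    calc WordLength S (g ^ (n + 1)) = WordLength S (g ^ n * g) := by rw [pow_succ]
      _ ≤ WordLength S (g ^ n) + WordLength S g := wl_mul hS _ _
      _ ≤ n * WordLength S g + WordLength S g := by omega
      _ = (n + 1) * WordLength S g := by ring

private lemma pow_mul_eq (x y : G) (hc : ∀ h : G, Commute ⁅x, y⁆ h) (n : ℕ) :
    x ^ n * y = ⁅x, y⁆ ^ n * y * x ^ n := by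
  induction n with
  | zero => simp
  | succ n ih =>
    have key : ⁅x, y⁆ * y * x = x * y := by
      rw [commutatorElement_def]; group
    calc x ^ (n + 1) * y = x * (x ^ n * y) := by rw [pow_succ']; group
      _ = x * (⁅x, y⁆ ^ n * y * x ^ n) := by rw [ih]
      _ = ⁅x, y⁆ ^ n * (x * y) * x ^ n := by
          have := ((hc x).pow_left n).eq
          rw [← mul_assoc, ← mul_assoc, ← this]; group
      _ = ⁅x, y⁆ ^ n * (⁅x, y⁆ * y * x) * x ^ n := by rw [key]
      _ = ⁅x, y⁆ ^ (n + 1) * y * x ^ (n + 1) := by rw [pow_succ, pow_succ]; group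

private lemma comm_pow_left (x y : G) (hc : ∀ h : G, Commute ⁅x, y⁆ h) (n : ℕ) :
    ⁅x ^ n, y⁆ = ⁅x, y⁆ ^ n := by
  have := pow_mul_eq x y hc n
  rw [commutatorElement_def, this]
  group

private lemma comm_pow_pow (x y : G) (hc : ∀ h : G, Commute ⁅x, y⁆ h) (n m : ℕ) :
    ⁅x ^ n, y ^ m⁆ = ⁅x, y⁆ ^ (n * m) := by
  have h1 : ⁅y, x ^ n⁆ = (⁅x, y⁆ ^ n)⁻¹ := by
    rw [← comm_pow_left x y hc n, ← commutatorElement_inv]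
  have hc2 : ∀ h : G, Commute ⁅y, x ^ n⁆ h := by
    intro h
    rw [h1]
    exact (((hc h).pow_left n).inv_left)
  have h2 : ⁅y ^ m, x ^ n⁆ = ⁅y, x ^ n⁆ ^ m := comm_pow_left y (x ^ n) hc2 m
  have h3 : ⁅x ^ n, y ^ m⁆ = (⁅y ^ m, x ^ n⁆)⁻¹ := by rw [← commutatorElement_inv]
  rw [h3, h2, h1]
  simp [← pow_mul, ← inv_pow, mul_comm m n]

end Aux

/-- In a finitely generated torsion-free nilpotent group of class exactly 2, any nontrivial
element `z` of the commutator subgroup generates a distorted cyclic subgroup: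
`|z^(n²)| ≤ C·n`. -/
theorem commutator_distorted_class_two {G : Type*} [Group G] [Group.IsNilpotent G]
    (S : Finset G) (hS : Subgroup.closure (S : Set G) = ⊤)
    (htf : ∀ g : G, g ≠ 1 → ¬IsOfFinOrder g)
    (hclass : Group.nilpotencyClass G = 2)
    (z : G) (hz : z ∈ commutator G) (hz1 : z ≠ 1) :
    ∃ C : ℕ, ∀ n : ℕ, 1 ≤ n → WordLength (S : Set G) (z ^ (n ^ 2)) ≤ C * n := by
  -- the commutator subgroup is central
  have hbot : lowerCentralSeries (⊤ : Subgroup G) 2 = ⊥ := by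
    rw [← hclass]; exact lowerCentralSeries_nilpotencyClass
  have hcent : ∀ g ∈ commutator G, ∀ h : G, Commute g h := by
    intro g hg h
    rw [← commutatorElement_eq_one_iff_commute]
    have : ⁅g, h⁆ ∈ lowerCentralSeries (⊤ : Subgroup G) 2 := by
      rw [show lowerCentralSeries (⊤ : Subgroup G) 2 = ⁅lowerCentralSeries (⊤ : Subgroup G) 1, ⊤⁆ from rfl]
      exact Subgroup.commutator_mem_commutator (by exact hg) (Subgroup.mem_top h)
    rw [hbot] at this
    simpa using this
  -- induction over the closure generating the commutator subgroup
  have hz' : z ∈ Subgroup.closure (commutatorSet G) := by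
    rwa [← commutator_eq_closure]
  refine Subgroup.closure_induction
    (p := fun g _ => ∃ C : ℕ, ∀ n : ℕ, 1 ≤ n →
      WordLength (S : Set G) (g ^ (n ^ 2)) ≤ C * n) ?_ ?_ ?_ ?_ hz'
  · -- generators: commutators
    rintro g ⟨x, y, rfl⟩
    have hcxy : ∀ h : G, Commute ⁅x, y⁆ h :=
      hcent _ (Subgroup.commutator_mem_commutator (Subgroup.mem_top x) (Subgroup.mem_top y))
    refine ⟨2 * (WordLength (S : Set G) x + WordLength (S : Set G) y), fun n hn => ?_⟩
    have key : ⁅x, y⁆ ^ (n ^ 2) = ⁅x ^ n, y ^ n⁆ := by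
      rw [comm_pow_pow x y hcxy n n]
      congr 1
      ring
    rw [key, commutatorElement_def]
    have h1 := wl_pow hS x n
    have h2 := wl_pow hS y n
    have h3 := wl_inv hS (x ^ n)
    have h4 := wl_inv hS (y ^ n)
    calc WordLength (S : Set G) (x ^ n * y ^ n * (x ^ n)⁻¹ * (y ^ n)⁻¹)
        ≤ WordLength (S : Set G) (x ^ n * y ^ n * (x ^ n)⁻¹) +
            WordLength (S : Set G) (y ^ n)⁻¹ := wl_mul hS _ _
      _ ≤ WordLength (S : Set G) (x ^ n * y ^ n) + WordLength (S : Set G) (x ^ n)⁻¹ +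
            WordLength (S : Set G) (y ^ n)⁻¹ := by
          have := wl_mul hS (x ^ n * y ^ n) (x ^ n)⁻¹; omega
      _ ≤ WordLength (S : Set G) (x ^ n) + WordLength (S : Set G) (y ^ n) +
            WordLength (S : Set G) (x ^ n)⁻¹ + WordLength (S : Set G) (y ^ n)⁻¹ := by
          have := wl_mul hS (x ^ n) (y ^ n); omega
      _ ≤ 2 * (WordLength (S : Set G) x + WordLength (S : Set G) y) * n := by
          nlinarith
  · -- 1
    refine ⟨0, fun n hn => ?_⟩
    simpa using wl_le_of_list (S := (S : Set G)) ([] : List G) (by simp)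
  · -- multiplication
    rintro g h hg hh ⟨C1, hC1⟩ ⟨C2, hC2⟩
    refine ⟨C1 + C2, fun n hn => ?_⟩
    have hcomm : Commute g h := hcent g (by rwa [commutator_eq_closure]) h
    have : (g * h) ^ n ^ 2 = g ^ n ^ 2 * h ^ n ^ 2 := hcomm.mul_pow _
    rw [this]
    calc WordLength (S : Set G) (g ^ n ^ 2 * h ^ n ^ 2)
        ≤ WordLength (S : Set G) (g ^ n ^ 2) + WordLength (S : Set G) (h ^ n ^ 2) :=
          wl_mul hS _ _
      _ ≤ C1 * n + C2 * n := Nat.add_le_add (hC1 n hn) (hC2 n hn)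
      _ = (C1 + C2) * n := by ring
  · -- inverse
    rintro g hg ⟨C, hC⟩
    refine ⟨C, fun n hn => ?_⟩
    calc WordLength (S : Set G) (g⁻¹ ^ n ^ 2)
        = WordLength (S : Set G) (g ^ n ^ 2)⁻¹ := by rw [inv_pow]
      _ ≤ WordLength (S : Set G) (g ^ n ^ 2) := wl_inv hS _
      _ ≤ C * n := hC n hn
end

section
/- Suppose G is a group in which every element of infinite order has only finitely many roots (for each g of infinite order, the set {h ∈ G : h^k = g for some k ≥ 1} is finite). Then the Baumslag–Solitar group BS(m,n) does not embed into G whenever m properly divides n (i.e., m | n and |m| < |n|). -/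
def BSRel (m n : ℤ) : Set (FreeGroup Bool) :=
  { FreeGroup.of true * (FreeGroup.of false) ^ m * (FreeGroup.of true)⁻¹ *
      ((FreeGroup.of false) ^ n)⁻¹ }

/-- The Baumslag–Solitar group `BS(m,n) = ⟨a, b | b aᵐ b⁻¹ = aⁿ⟩`. -/
def BS (m n : ℤ) : Type := PresentedGroup (BSRel m n)

instance (m n : ℤ) : Group (BS m n) := by unfold BS; infer_instance

def BSa (m n : ℤ) : BS m n := PresentedGroup.of false
def BSb (m n : ℤ) : BS m n := PresentedGroup.of true

section Aux

/-- The relator holds in `BS(m,n)`. -/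
lemma BS_relator_eq (m n : ℤ) :
    BSb m n * (BSa m n) ^ m * (BSb m n)⁻¹ = (BSa m n) ^ n := by
  have hmem : (FreeGroup.of true * (FreeGroup.of false) ^ m * (FreeGroup.of true)⁻¹ *
      ((FreeGroup.of false) ^ n)⁻¹ : FreeGroup Bool) ∈
      Subgroup.normalClosure (BSRel m n) :=
    Subgroup.subset_normalClosure rfl
  have h1 : (PresentedGroup.mk (BSRel m n)) (FreeGroup.of true * (FreeGroup.of false) ^ m *
      (FreeGroup.of true)⁻¹ * ((FreeGroup.of false) ^ n)⁻¹) = 1 :=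
    (QuotientGroup.eq_one_iff _).mpr hmem
  have h2 : BSb m n * (BSa m n) ^ m * (BSb m n)⁻¹ * ((BSa m n) ^ n)⁻¹ = 1 := by
    simp only [map_mul, map_zpow, map_inv] at h1
    exact h1
  exact mul_inv_eq_one.mp h2

lemma BS_conj_pow (m n q : ℤ) (hn : n = m * q) (k : ℕ) :
    (BSb m n) ^ k * (BSa m n) ^ m * ((BSb m n) ^ k)⁻¹ = (BSa m n) ^ (m * q ^ k) := by
  induction k with
  | zero => simp
  | succ k ih =>
    set A := BSa m n
    set B := BSb m n
    calc B ^ (k + 1) * A ^ m * (B ^ (k + 1))⁻¹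
        = B ^ k * (B * A ^ m * B⁻¹) * (B ^ k)⁻¹ := by
          rw [pow_succ]; group
      _ = B ^ k * (A ^ m) ^ q * (B ^ k)⁻¹ := by
          rw [BS_relator_eq m n]
          have : A ^ n = (A ^ m) ^ q := by
            rw [← zpow_mul]
            exact congrArg (fun z => A ^ z) hn
          rw [this]
      _ = (B ^ k * A ^ m * (B ^ k)⁻¹) ^ q := (conj_zpow).symm
      _ = (A ^ (m * q ^ k)) ^ q := by rw [ih]
      _ = A ^ (m * q ^ (k + 1)) := by
          rw [← zpow_mul]; congr 1; ring

lemma BS_root (m n q : ℤ) (hn : n = m * q) (k : ℕ) :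
    (((BSb m n) ^ k)⁻¹ * (BSa m n) ^ m * (BSb m n) ^ k) ^ (q ^ k : ℤ) = (BSa m n) ^ m := by
  set A := BSa m n
  set B := BSb m n
  have h1 : ((B ^ k)⁻¹ * A ^ m * B ^ k) ^ (q ^ k : ℤ)
      = (B ^ k)⁻¹ * (A ^ m) ^ (q ^ k : ℤ) * B ^ k := by
    simpa using (conj_zpow (i := (q ^ k : ℤ)) (a := (B ^ k)⁻¹) (b := A ^ m))
  have h2 : (A ^ m) ^ (q ^ k : ℤ) = A ^ (m * q ^ k) := by rw [← zpow_mul]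
  rw [h1, h2, ← BS_conj_pow m n q hn k]
  simp only [A, B]
  group

lemma Equiv.zpow_addRight {α : Type*} [AddCommGroup α] (a : α) (n : ℤ) :
    Equiv.addRight a ^ n = Equiv.addRight (n • a) := by
  induction n using Int.induction_on with
  | zero => ext; simp
  | succ k ih => rw [zpow_add_one, ih]; ext x; simp [add_zsmul, add_assoc, add_comm]
  | pred k ih =>
    rw [zpow_sub_one, ih]; ext x; simp
    rw [sub_zsmul, one_zsmul, neg_zsmul, natCast_zsmul]; abel

/-- The affine representation of `BS(m,n)` on `ℚ`:
`a ↦ (x ↦ x + 1)`, `b ↦ (x ↦ q·x)` where `q = n/m`. -/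
noncomputable def BSrepFun (q : ℚ) (hq : q ≠ 0) : Bool → Equiv.Perm ℚ
  | false => Equiv.addRight (1 : ℚ)
  | true => MulAction.toPermHom ℚˣ ℚ (Units.mk0 q hq)

noncomputable def BSrep (m n q : ℤ) (hq : (q : ℚ) ≠ 0) (hn : n = m * q) :
    BS m n →* Equiv.Perm ℚ :=
  PresentedGroup.toGroup (f := BSrepFun (q : ℚ) hq) (by
    rintro r hr
    rw [BSRel, Set.mem_singleton_iff] at hr
    subst hr
    simp only [map_mul, map_zpow, map_inv, FreeGroup.lift_apply_of]
    rw [mul_inv_eq_one]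
    show BSrepFun (q : ℚ) hq true * (BSrepFun (q : ℚ) hq false) ^ m *
        (BSrepFun (q : ℚ) hq true)⁻¹ = (BSrepFun (q : ℚ) hq false) ^ n
    simp only [BSrepFun]
    rw [← map_inv (MulAction.toPermHom ℚˣ ℚ) (Units.mk0 (q : ℚ) hq)]
    apply Equiv.ext
    intro x
    simp only [Equiv.zpow_addRight, Equiv.Perm.mul_apply, MulAction.toPermHom_apply,
      MulAction.toPerm_apply, Units.smul_def, Units.val_inv_eq_inv_val, Units.val_mk0,
      Equiv.coe_addRight, zsmul_eq_mul, mul_one]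
    have hnq : (n : ℚ) = (m : ℚ) * (q : ℚ) := by rw [hn]; push_cast; ring
    rw [hnq]
    simp only [smul_eq_mul]
    field_simp)

lemma BSrep_a (m n q : ℤ) (hq : (q : ℚ) ≠ 0) (hn : n = m * q) :
    BSrep m n q hq hn (BSa m n) = Equiv.addRight (1 : ℚ) :=
  PresentedGroup.toGroup.of _

lemma BSrep_b (m n q : ℤ) (hq : (q : ℚ) ≠ 0) (hn : n = m * q) :
    BSrep m n q hq hn (BSb m n) = MulAction.toPermHom ℚˣ ℚ (Units.mk0 (q : ℚ) hq) :=
  PresentedGroup.toGroup.of _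

lemma BSa_zpow_eq_one (m n q : ℤ) (hq : (q : ℚ) ≠ 0) (hn : n = m * q) (z : ℤ)
    (h : (BSa m n) ^ z = 1) : z = 0 := by
  have h1 : (BSrep m n q hq hn) ((BSa m n) ^ z) = 1 := by rw [h]; exact map_one _
  rw [map_zpow, BSrep_a, Equiv.zpow_addRight] at h1
  have h2 := congrFun (congrArg (fun e : Equiv.Perm ℚ => (e : ℚ → ℚ)) h1) 0
  simp only [Equiv.coe_addRight, zsmul_eq_mul, mul_one, zero_add,
    Equiv.Perm.coe_one, id] at h2
  exact_mod_cast h2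

lemma BSrep_w (m n q : ℤ) (hq : (q : ℚ) ≠ 0) (hn : n = m * q) (k : ℕ) :
    (BSrep m n q hq hn) (((BSb m n) ^ k)⁻¹ * (BSa m n) ^ m * (BSb m n) ^ k) 0
      = ((q : ℚ) ^ k)⁻¹ * (m : ℚ) := by
  set u : ℚˣ := Units.mk0 (q : ℚ) hq with hu
  have hB : (BSrep m n q hq hn) ((BSb m n) ^ k)
      = MulAction.toPermHom ℚˣ ℚ (u ^ k) := by
    rw [map_pow, BSrep_b, ← map_pow]
  have hBi : (BSrep m n q hq hn) (((BSb m n) ^ k)⁻¹)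
      = MulAction.toPermHom ℚˣ ℚ ((u ^ k)⁻¹) := by
    rw [map_inv, hB, ← map_inv]
  rw [map_mul, map_mul, hB, hBi, map_zpow, BSrep_a, Equiv.zpow_addRight]
  simp only [Equiv.Perm.mul_apply, MulAction.toPermHom_apply, MulAction.toPerm_apply,
    Units.smul_def, Equiv.coe_addRight, zsmul_eq_mul, mul_one, hu,
    Units.val_inv_eq_inv_val, Units.val_pow_eq_pow_val, Units.val_mk0]
  simp [smul_eq_mul]

end Aux

/-- If in `G` every element of infinite order has only finitely many roots, then `BS(m,n)`
does not embed into `G` whenever `m` properly divides `n`. -/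
theorem BS_not_embeds_of_finitely_many_roots {G : Type*} [Group G]
    (hG : ∀ g : G, ¬IsOfFinOrder g → {h : G | ∃ k : ℕ, 1 ≤ k ∧ h ^ k = g}.Finite)
    (m n : ℤ) (hdvd : m ∣ n) (hlt : m.natAbs < n.natAbs) :
    ¬∃ f : BS m n →* G, Function.Injective f := by
  rintro ⟨f, hf⟩
  obtain ⟨q, hn⟩ := hdvd
  have hm : m ≠ 0 := by
    rintro rfl
    simp only [zero_mul] at hn
    subst hn
    simp at hlt
  have hq2 : 1 < q.natAbs := by
    by_contra hq1
    push_neg at hq1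
    have : n.natAbs ≤ m.natAbs := by
      rw [hn, Int.natAbs_mul]
      calc m.natAbs * q.natAbs ≤ m.natAbs * 1 := Nat.mul_le_mul_left _ hq1
        _ = m.natAbs := mul_one _
    omega
  have hq0 : q ≠ 0 := by
    intro h; rw [h] at hq2; simp at hq2
  have hqQ : (q : ℚ) ≠ 0 := Int.cast_ne_zero.mpr hq0
  -- the element of infinite order
  set g : G := f ((BSa m n) ^ m) with hg
  have hginf : ¬IsOfFinOrder g := by
    intro hfin
    obtain ⟨k, hk, hk1⟩ := isOfFinOrder_iff_pow_eq_one.mp hfin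
    have h1 : f (((BSa m n) ^ m) ^ k) = f 1 := by
      rw [map_pow, map_one, ← hg, hk1]
    have h2 : (BSa m n) ^ (m * (k : ℤ)) = 1 := by
      rw [zpow_mul, zpow_natCast]
      exact hf h1
    have := BSa_zpow_eq_one m n q hqQ hn _ h2
    have hk0 : (k : ℤ) ≠ 0 := Int.natCast_ne_zero.mpr hk.ne'
    exact (mul_ne_zero hm hk0) this
  -- the roots
  set w : ℕ → BS m n := fun k => ((BSb m n) ^ k)⁻¹ * (BSa m n) ^ m * (BSb m n) ^ k with hw
  have hpos : ∀ j : ℕ, (0 : ℤ) < q ^ (2 * j) := by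
    intro j
    rw [pow_mul]
    exact pow_pos (by positivity) j
  have hmem : ∀ j : ℕ, f (w (2 * j)) ∈ {h : G | ∃ k : ℕ, 1 ≤ k ∧ h ^ k = g} := by
    intro j
    have hposj := hpos j
    refine ⟨(q ^ (2 * j)).toNat, by omega, ?_⟩
    have hcast : (((q ^ (2 * j)).toNat : ℤ)) = q ^ (2 * j) :=
      Int.toNat_of_nonneg hposj.le
    rw [← map_pow, hg]
    congr 1
    calc w (2 * j) ^ (q ^ (2 * j)).toNat
        = w (2 * j) ^ (((q ^ (2 * j)).toNat : ℤ)) := (zpow_natCast _ _).symm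
      _ = w (2 * j) ^ (q ^ (2 * j)) := by rw [hcast]
      _ = (BSa m n) ^ m := by rw [hw]; exact BS_root m n q hn (2 * j)
  have hinj : Function.Injective (fun j : ℕ => f (w (2 * j))) := by
    intro i j hij
    have hww : w (2 * i) = w (2 * j) := hf hij
    have h0 := congrArg (fun x => (BSrep m n q hqQ hn) x 0) hww
    simp only [hw, BSrep_w] at h0
    have hmQ : (m : ℚ) ≠ 0 := Int.cast_ne_zero.mpr hm
    have h1 : ((q : ℚ) ^ (2 * i))⁻¹ = ((q : ℚ) ^ (2 * j))⁻¹ :=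
      mul_right_cancel₀ hmQ h0
    have h2 : (q : ℚ) ^ (2 * i) = (q : ℚ) ^ (2 * j) := inv_injective h1
    have h3 : (q ^ (2 * i) : ℤ) = q ^ (2 * j) := by exact_mod_cast h2
    have := Int.pow_right_injective hq2 h3
    omega
  have hfin := hG g hginf
  exact (Set.infinite_of_injective_forall_mem hinj hmem) hfin
end

section
/- If a finitely generated group G has context-free co-word problem (with respect to some, equivalently any, finite generating set), then every finitely generated subgroup H of G also has context-free co-word problem. -/
set_option linter.unusedSectionVars false
set_option maxHeartbeats 1000000


namespace CoCFProof

open ContextFreeGrammar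

universe uT uN
variable {T : Type uT}

/-- Derivations with an explicit step count. -/
inductive DerivesIn (g : ContextFreeGrammar.{uT} T) :
    ℕ → List (Symbol T g.NT) → List (Symbol T g.NT) → Prop
  | refl (w : List (Symbol T g.NT)) : DerivesIn g 0 w w
  | head {n : ℕ} {u v w : List (Symbol T g.NT)} (h : g.Produces u v) (hd : DerivesIn g n v w) :
      DerivesIn g (n + 1) u w

variable {g : ContextFreeGrammar.{uT} T}

lemma DerivesIn.toDerives {n : ℕ} {u v : List (Symbol T g.NT)} (h : DerivesIn g n u v) :
    g.Derives u v := by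
  induction h with
  | refl => rfl
  | head h _ ih => exact h.trans_derives ih

lemma Derives.toDerivesIn {u v : List (Symbol T g.NT)} (h : g.Derives u v) :
    ∃ n, DerivesIn g n u v := by
  induction h using Relation.ReflTransGen.head_induction_on with
  | refl => exact ⟨0, .refl v⟩
  | head hp _ ih => obtain ⟨n, hn⟩ := ih; exact ⟨n + 1, .head hp hn⟩

lemma DerivesIn.trans {m n : ℕ} {u v w : List (Symbol T g.NT)}
    (h₁ : DerivesIn g m u v) (h₂ : DerivesIn g n v w) : DerivesIn g (m + n) u w := by
  induction h₁ with
  | refl => simpa using h₂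
  | head h _ ih => rw [Nat.add_right_comm]; exact .head h (ih h₂)

lemma DerivesIn.cases_head {n : ℕ} {u w : List (Symbol T g.NT)} (h : DerivesIn g n u w) :
    (n = 0 ∧ u = w) ∨ ∃ m v, n = m + 1 ∧ g.Produces u v ∧ DerivesIn g m v w := by
  cases h with
  | refl => exact Or.inl ⟨rfl, rfl⟩
  | head hp hd => exact Or.inr ⟨_, _, rfl, hp, hd⟩

lemma no_nonterminal_in_terminal {x : List T} {A : g.NT}
    (h : Symbol.nonterminal A ∈ x.map (Symbol.terminal (N := g.NT))) : False := by
  simp only [List.mem_map] at h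
  obtain ⟨t, -, ht⟩ := h
  cases ht

lemma produces_terminal_false {x : List T} {v : List (Symbol T g.NT)}
    (h : g.Produces (x.map Symbol.terminal) v) : False := by
  obtain ⟨r, -, hr⟩ := h
  obtain ⟨p, q, hpq, -⟩ := hr.exists_parts
  exact no_nonterminal_in_terminal (A := r.input) (by rw [hpq]; simp)

/-- A string of terminals derives only itself. -/
lemma DerivesIn.terminal_eq {n : ℕ} {x : List T} {v : List (Symbol T g.NT)}
    (h : DerivesIn g n (x.map Symbol.terminal) v) : v = x.map Symbol.terminal ∧ n = 0 := by
  rcases h.cases_head with ⟨rfl, rfl⟩ | ⟨m, u, rfl, hp, -⟩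
  · exact ⟨rfl, rfl⟩
  · exact absurd hp produces_terminal_false

lemma derives_terminal_eq {x : List T} {v : List (Symbol T g.NT)}
    (h : g.Derives (x.map Symbol.terminal) v) : v = x.map Symbol.terminal := by
  obtain ⟨n, hn⟩ := Derives.toDerivesIn h
  exact hn.terminal_eq.1

/-- Splitting a derivation of a terminal word from a concatenation. -/
lemma DerivesIn.split {n : ℕ} {s₁ s₂ : List (Symbol T g.NT)} {w : List T}
    (h : DerivesIn g n (s₁ ++ s₂) (w.map Symbol.terminal)) :
    ∃ w₁ w₂ n₁ n₂, w = w₁ ++ w₂ ∧ n₁ + n₂ = n ∧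
      DerivesIn g n₁ s₁ (w₁.map Symbol.terminal) ∧ DerivesIn g n₂ s₂ (w₂.map Symbol.terminal) := by
  induction n generalizing s₁ s₂ with
  | zero =>
    rcases h.cases_head with ⟨-, hw⟩ | ⟨m, u, hm, -, -⟩
    · obtain ⟨w₁, w₂, rfl, h₁, h₂⟩ := List.map_eq_append_iff.mp hw.symm
      exact ⟨w₁, w₂, 0, 0, rfl, rfl, h₁ ▸ .refl _, h₂ ▸ .refl _⟩
    · omega
  | succ n ih =>
    rcases h.cases_head with ⟨hn0, -⟩ | ⟨m, v, hm, hp, hd⟩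
    · omega
    · obtain rfl : n = m := by omega
      obtain ⟨r, hrg, hr⟩ := hp
      obtain ⟨p, q, hpq, hv⟩ := hr.exists_parts
      rw [List.append_assoc] at hpq
      rcases List.append_eq_append_iff.mp hpq with ⟨x, hx1, hx2⟩ | ⟨x, hx1, hx2⟩
      · -- p = s₁ ++ x : the rewritten nonterminal is inside s₂
        have hstep : r.Rewrites s₂ (x ++ r.output ++ q) := by
          rw [hx2]
          simpa [List.append_assoc] using ContextFreeRule.rewrites_of_exists_parts r x q
        have hv' : DerivesIn g n (s₁ ++ (x ++ r.output ++ q)) (w.map Symbol.terminal) := by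
          have hveq : v = s₁ ++ (x ++ r.output ++ q) := by
            rw [hv, hx1]; simp [List.append_assoc]
          exact hveq ▸ hd
        obtain ⟨w₁, w₂, n₁, n₂, hw, hn, h₁, h₂⟩ := ih hv'
        exact ⟨w₁, w₂, n₁, n₂ + 1, hw, by omega, h₁, .head ⟨r, hrg, hstep⟩ h₂⟩
      · -- s₁ = p ++ x and [nt] ++ q = x ++ s₂
        rcases x with _ | ⟨X, x⟩
        · -- nonterminal at the start of s₂
          rw [List.append_nil] at hx1
          rw [List.nil_append] at hx2
          have hstep : r.Rewrites s₂ ([] ++ r.output ++ q) := by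
            rw [← hx2]; simpa using ContextFreeRule.rewrites_of_exists_parts r [] q
          have hv' : DerivesIn g n (s₁ ++ ([] ++ r.output ++ q)) (w.map Symbol.terminal) := by
            have hveq : v = s₁ ++ ([] ++ r.output ++ q) := by
              rw [hv, hx1]; simp [List.append_assoc]
            exact hveq ▸ hd
          obtain ⟨w₁, w₂, n₁, n₂, hw, hn, h₁, h₂⟩ := ih hv'
          exact ⟨w₁, w₂, n₁, n₂ + 1, hw, by omega, h₁, .head ⟨r, hrg, hstep⟩ h₂⟩
        · -- nonterminal inside s₁
          rw [List.singleton_append, List.cons_append] at hx2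
          have hXeq : Symbol.nonterminal r.input = X := List.head_eq_of_cons_eq hx2
          have hq : q = x ++ s₂ := List.tail_eq_of_cons_eq hx2
          have hstep : r.Rewrites s₁ (p ++ r.output ++ x) := by
            rw [hx1, ← hXeq]
            simpa [List.append_assoc] using ContextFreeRule.rewrites_of_exists_parts r p x
          have hv' : DerivesIn g n ((p ++ r.output ++ x) ++ s₂) (w.map Symbol.terminal) := by
            have hveq : v = (p ++ r.output ++ x) ++ s₂ := by
              rw [hv, hq]; simp [List.append_assoc]
            exact hveq ▸ hd
          obtain ⟨w₁, w₂, n₁, n₂, hw, hn, h₁, h₂⟩ := ih hv'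
          exact ⟨w₁, w₂, n₁ + 1, n₂, hw, by omega, .head ⟨r, hrg, hstep⟩ h₁, h₂⟩

/-- First step of a derivation starting from a single nonterminal. -/
lemma DerivesIn.head_of_nonterminal {n : ℕ} {A : g.NT} {w : List T}
    (h : DerivesIn g n [Symbol.nonterminal A] (w.map Symbol.terminal)) :
    ∃ m r, n = m + 1 ∧ r ∈ g.rules ∧ r.input = A ∧
      DerivesIn g m r.output (w.map Symbol.terminal) := by
  rcases h.cases_head with ⟨-, hw⟩ | ⟨m, v, rfl, hp, hd⟩
  · exact absurd (hw ▸ List.mem_singleton_self _ :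
      Symbol.nonterminal A ∈ w.map Symbol.terminal) no_nonterminal_in_terminal
  · obtain ⟨r, hrg, hr⟩ := hp
    obtain ⟨p, q, hpq, hv⟩ := hr.exists_parts
    have hp0 : p = [] := by
      cases p with
      | nil => rfl
      | cons a p => exfalso; have := congrArg List.length hpq; simp at this
    subst hp0
    simp only [List.nil_append] at hpq hv
    have hq0 : q = [] := by
      cases q with
      | nil => rfl
      | cons a q => exfalso; have := congrArg List.length hpq; simp at this
    subst hq0
    have hin : r.input = A := by
      have := congrArg (fun l => l.head?) hpq
      simp at this
      exact this.symm
    refine ⟨m, r, rfl, hrg, hin, ?_⟩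
    simpa [hv] using hd




section Constr

variable {α β : Type}

/-- Apply the substitution `φ` letterwise and concatenate. -/
def star (φ : β → List α) (w : List β) : List α := (w.map φ).flatten

@[simp] lemma star_nil (φ : β → List α) : star φ [] = [] := rfl

@[simp] lemma star_cons (φ : β → List α) (b : β) (w : List β) :
    star φ (b :: w) = φ b ++ star φ w := by simp [star]

@[simp] lemma star_append (φ : β → List α) (w₁ w₂ : List β) :
    star φ (w₁ ++ w₂) = star φ w₁ ++ star φ w₂ := by simp [star]

lemma star_eq_nil {φ : β → List α} (hφ : ∀ b, φ b ≠ []) {w : List β}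
    (h : star φ w = []) : w = [] := by
  cases w with
  | nil => rfl
  | cons b w => exfalso; rw [star_cons, List.append_eq_nil_iff] at h; exact hφ b h.1

/-- Nonterminals of the inverse-substitution grammar. -/
inductive NT' (α N : Type) : Type
  | tri (u : List α) (B : N) (v : List α)
  | chain (u : List α) (s : List (Symbol α N)) (v : List α)
  | etri (u : List α) (B : N)
  | echain (u : List α) (s : List (Symbol α N))

variable {N : Type}

/-- Suffixes of right-hand sides of rules. -/
def SufS (g : ContextFreeGrammar α) : Set (List (Symbol α g.NT)) :=
  {s | s = [] ∨ ∃ r ∈ g.rules, s <:+ r.output}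

lemma SufS_tail {g : ContextFreeGrammar α} {X : Symbol α g.NT} {s : List (Symbol α g.NT)}
    (h : (X :: s) ∈ SufS g) : s ∈ SufS g := by
  rcases h with h | ⟨r, hr, hsuf⟩
  · exact absurd h (by simp)
  · exact Or.inr ⟨r, hr, (List.suffix_cons X s).trans hsuf⟩

lemma mem_sufS_self {g : ContextFreeGrammar α} {r : ContextFreeRule α g.NT} (hr : r ∈ g.rules) :
    r.output ∈ SufS g := Or.inr ⟨r, hr, List.suffix_refl _⟩

lemma sufS_head_nt {g : ContextFreeGrammar α} {B : g.NT} {s : List (Symbol α g.NT)}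
    (h : (Symbol.nonterminal B :: s) ∈ SufS g) :
    ∃ r ∈ g.rules, Symbol.nonterminal B ∈ r.output := by
  rcases h with h | ⟨r, hr, hsuf⟩
  · exact absurd h (by simp)
  · exact ⟨r, hr, hsuf.subset (by simp)⟩

/-- The rules of the inverse-substitution grammar. -/
inductive IsRule (g : ContextFreeGrammar α) (φ : β → List α) (K : ℕ) :
    ContextFreeRule β (NT' α g.NT) → Prop
  | r1 {u v : List α} {r : ContextFreeRule α g.NT} (hr : r ∈ g.rules)
      (hu : u.length ≤ K) (hv : v.length ≤ K) :
      IsRule g φ K ⟨.tri u r.input v, [.nonterminal (.chain u r.output v)]⟩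
  | r2 : IsRule g φ K ⟨.chain [] [] [], []⟩
  | r3 {a : α} {u v : List α} {s : List (Symbol α g.NT)}
      (hu : (a :: u).length ≤ K) (hv : v.length ≤ K) (hs : (Symbol.terminal a :: s) ∈ SufS g) :
      IsRule g φ K ⟨.chain (a :: u) (Symbol.terminal a :: s) v, [.nonterminal (.chain u s v)]⟩
  | r4 {a : α} {c v : List α} {s : List (Symbol α g.NT)} {b : β}
      (hb : φ b = a :: c) (hv : v.length ≤ K) (hs : (Symbol.terminal a :: s) ∈ SufS g) :
      IsRule g φ K ⟨.chain [] (Symbol.terminal a :: s) v,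
        [.terminal b, .nonterminal (.chain c s v)]⟩
  | r5 {a : α} {v : List α} {s : List (Symbol α g.NT)}
      (hv : (a :: v).length ≤ K) (hs : (Symbol.terminal a :: s) ∈ SufS g) :
      IsRule g φ K ⟨.chain [] (Symbol.terminal a :: s) (a :: v), [.nonterminal (.echain v s)]⟩
  | r6 {u v c₁ c₂ : List α} {B : g.NT} {s : List (Symbol α g.NT)} {b : β}
      (hb : φ b = c₁ ++ c₂) (hu : u.length ≤ K) (hv : v.length ≤ K)
      (hs : (Symbol.nonterminal B :: s) ∈ SufS g) :
      IsRule g φ K ⟨.chain u (Symbol.nonterminal B :: s) v,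
        [.nonterminal (.tri u B c₁), .terminal b, .nonterminal (.chain c₂ s v)]⟩
  | r7 {u₁ u₂ v : List α} {B : g.NT} {s : List (Symbol α g.NT)}
      (hu : (u₁ ++ u₂).length ≤ K) (hv : v.length ≤ K)
      (hs : (Symbol.nonterminal B :: s) ∈ SufS g) :
      IsRule g φ K ⟨.chain (u₁ ++ u₂) (Symbol.nonterminal B :: s) v,
        [.nonterminal (.etri u₁ B), .nonterminal (.chain u₂ s v)]⟩
  | r8 {u v₁ v₂ : List α} {B : g.NT} {s : List (Symbol α g.NT)}
      (hu : u.length ≤ K) (hv : (v₁ ++ v₂).length ≤ K)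
      (hs : (Symbol.nonterminal B :: s) ∈ SufS g) :
      IsRule g φ K ⟨.chain u (Symbol.nonterminal B :: s) (v₁ ++ v₂),
        [.nonterminal (.tri u B v₁), .nonterminal (.echain v₂ s)]⟩
  | r9 {u : List α} {r : ContextFreeRule α g.NT} (hr : r ∈ g.rules) (hu : u.length ≤ K) :
      IsRule g φ K ⟨.etri u r.input, [.nonterminal (.echain u r.output)]⟩
  | r10 : IsRule g φ K ⟨.echain [] [], []⟩
  | r11 {a : α} {u : List α} {s : List (Symbol α g.NT)}
      (hu : (a :: u).length ≤ K) (hs : (Symbol.terminal a :: s) ∈ SufS g) :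
      IsRule g φ K ⟨.echain (a :: u) (Symbol.terminal a :: s), [.nonterminal (.echain u s)]⟩
  | r12 {u₁ u₂ : List α} {B : g.NT} {s : List (Symbol α g.NT)}
      (hu : (u₁ ++ u₂).length ≤ K)
      (hs : (Symbol.nonterminal B :: s) ∈ SufS g) :
      IsRule g φ K ⟨.echain (u₁ ++ u₂) (Symbol.nonterminal B :: s),
        [.nonterminal (.etri u₁ B), .nonterminal (.echain u₂ s)]⟩

/-- Lists of bounded length with entries in a finite set form a finite set. -/
lemma listsBounded_finite {X : Type*} {S : Set X} (hS : S.Finite) :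
    ∀ n : ℕ, {l : List X | l.length ≤ n ∧ ∀ x ∈ l, x ∈ S}.Finite := by
  intro n
  induction n with
  | zero =>
    apply Set.Finite.subset (Set.finite_singleton ([] : List X))
    rintro l ⟨hl, -⟩
    simpa using List.length_eq_zero_iff.mp (Nat.le_zero.mp hl)
  | succ n ih =>
    apply Set.Finite.subset (Set.Finite.insert [] ((hS.prod ih).image
      (fun p : X × List X => p.1 :: p.2)))
    rintro l ⟨hl, hmem⟩
    cases l with
    | nil => exact Set.mem_insert _ _
    | cons x l =>
      refine Set.mem_insert_of_mem _ ⟨⟨x, l⟩, ⟨hmem x (by simp), ?_, ?_⟩, rfl⟩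
      · simpa using hl
      · exact fun y hy => hmem y (by simp [hy])

variable [Fintype α] [Fintype β]

lemma bufS_finite (K : ℕ) : {l : List α | l.length ≤ K}.Finite := by
  have := listsBounded_finite (Set.finite_univ (α := α)) K
  apply Set.Finite.subset this
  intro l hl
  exact ⟨hl, fun x _ => Set.mem_univ x⟩

lemma sufS_finite (g : ContextFreeGrammar α) : (SufS g).Finite := by
  have hsub : SufS g ⊆ insert []
      (⋃ r ∈ (↑g.rules : Set (ContextFreeRule α g.NT)), {s | s ∈ r.output.tails}) := by
    rintro s (rfl | ⟨r, hr, hsuf⟩)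
    · exact Set.mem_insert _ _
    · exact Set.mem_insert_of_mem _
        (Set.mem_biUnion (by exact_mod_cast hr) (by simpa [List.mem_tails] using hsuf))
  exact Set.Finite.subset (Set.Finite.insert _ (Set.Finite.biUnion g.rules.finite_toSet
    (fun r _ => r.output.tails.finite_toSet))) hsub

/-- Nonterminals of `g` occurring in the rules of `g`. -/
def NTS (g : ContextFreeGrammar α) : Set g.NT :=
  {B | ∃ r ∈ g.rules, Symbol.nonterminal B ∈ r.output ∨ B = r.input}

lemma ntS_finite (g : ContextFreeGrammar α) : (NTS g).Finite := by
  have hsub : NTS g ⊆ ⋃ r ∈ (↑g.rules : Set (ContextFreeRule α g.NT)),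
      ((fun B => (Symbol.nonterminal B : Symbol α g.NT)) ⁻¹' {x | x ∈ r.output} ∪ {r.input}) := by
    rintro B ⟨r, hr, hB | hB⟩
    · exact Set.mem_biUnion (by exact_mod_cast hr) (Or.inl hB)
    · exact Set.mem_biUnion (by exact_mod_cast hr) (Or.inr hB)
  refine Set.Finite.subset (Set.Finite.biUnion g.rules.finite_toSet (fun r _ => ?_)) hsub
  refine Set.Finite.union (Set.Finite.preimage ?_ r.output.finite_toSet)
    (Set.finite_singleton _)
  intro x _ y _ h
  injection h

/-- Bounded nonterminals of the new grammar. -/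
def NTbounded (g : ContextFreeGrammar α) (K : ℕ) : Set (NT' α g.NT) :=
  ((fun p : List α × g.NT × List α => NT'.tri p.1 p.2.1 p.2.2) ''
      ({l | l.length ≤ K} ×ˢ NTS g ×ˢ {l | l.length ≤ K})) ∪
  ((fun p : List α × List (Symbol α g.NT) × List α => NT'.chain p.1 p.2.1 p.2.2) ''
      ({l | l.length ≤ K} ×ˢ SufS g ×ˢ {l | l.length ≤ K})) ∪
  ((fun p : List α × g.NT => NT'.etri p.1 p.2) '' ({l | l.length ≤ K} ×ˢ NTS g)) ∪
  ((fun p : List α × List (Symbol α g.NT) => NT'.echain p.1 p.2) ''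
      ({l | l.length ≤ K} ×ˢ SufS g))

lemma mem_tri {g : ContextFreeGrammar α} {K : ℕ} {u v : List α} {B : g.NT}
    (hu : u.length ≤ K) (hB : B ∈ NTS g) (hv : v.length ≤ K) :
    NT'.tri u B v ∈ NTbounded g K :=
  Or.inl (Or.inl (Or.inl ⟨(u, B, v), ⟨hu, hB, hv⟩, rfl⟩))

lemma mem_chain {g : ContextFreeGrammar α} {K : ℕ} {u v : List α} {s : List (Symbol α g.NT)}
    (hu : u.length ≤ K) (hs : s ∈ SufS g) (hv : v.length ≤ K) :
    NT'.chain u s v ∈ NTbounded g K :=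
  Or.inl (Or.inl (Or.inr ⟨(u, s, v), ⟨hu, hs, hv⟩, rfl⟩))

lemma mem_etri {g : ContextFreeGrammar α} {K : ℕ} {u : List α} {B : g.NT}
    (hu : u.length ≤ K) (hB : B ∈ NTS g) :
    NT'.etri u B ∈ NTbounded g K :=
  Or.inl (Or.inr ⟨(u, B), ⟨hu, hB⟩, rfl⟩)

lemma mem_echain {g : ContextFreeGrammar α} {K : ℕ} {u : List α} {s : List (Symbol α g.NT)}
    (hu : u.length ≤ K) (hs : s ∈ SufS g) :
    NT'.echain u s ∈ NTbounded g K :=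
  Or.inr ⟨(u, s), ⟨hu, hs⟩, rfl⟩

lemma ntBounded_finite (g : ContextFreeGrammar α) (K : ℕ) : (NTbounded g K).Finite := by
  have hb := bufS_finite (α := α) K
  have hs := sufS_finite g
  have hn := ntS_finite g
  refine Set.Finite.union (Set.Finite.union (Set.Finite.union ?_ ?_) ?_) ?_
  · exact (hb.prod (hn.prod hb)).image _
  · exact (hb.prod (hs.prod hb)).image _
  · exact (hb.prod hn).image _
  · exact (hb.prod hs).image _

/-- Symbols of the new grammar that can occur in rules. -/
def SymS (g : ContextFreeGrammar α) (K : ℕ) : Set (Symbol β (NT' α g.NT)) :=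
  Set.range Symbol.terminal ∪ Symbol.nonterminal '' NTbounded g K

lemma mem_symT {g : ContextFreeGrammar α} {K : ℕ} {b : β} :
    (Symbol.terminal b : Symbol β (NT' α g.NT)) ∈ SymS g K := Or.inl ⟨b, rfl⟩

lemma mem_symN {g : ContextFreeGrammar α} {K : ℕ} {X : NT' α g.NT} (h : X ∈ NTbounded g K) :
    (Symbol.nonterminal X : Symbol β (NT' α g.NT)) ∈ SymS g K := Or.inr ⟨X, h, rfl⟩

lemma ntS_of_sufS {g : ContextFreeGrammar α} {B : g.NT} {s : List (Symbol α g.NT)}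
    (h : (Symbol.nonterminal B :: s) ∈ SufS g) : B ∈ NTS g := by
  obtain ⟨r, hr, hB⟩ := sufS_head_nt h
  exact ⟨r, hr, Or.inl hB⟩

lemma isRule_finite (g : ContextFreeGrammar α) (φ : β → List α) (K : ℕ)
    (hK : ∀ b, (φ b).length ≤ K) : {r' | IsRule g φ K r'}.Finite := by
  have hSym : (SymS g K (β := β)).Finite :=
    (Set.finite_range _).union ((ntBounded_finite g K).image _)
  have hbig : {r' | IsRule g φ K r'} ⊆
      (fun p : NT' α g.NT × List (Symbol β (NT' α g.NT)) =>
        (⟨p.1, p.2⟩ : ContextFreeRule β (NT' α g.NT))) ''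
      (NTbounded g K ×ˢ {l | l.length ≤ 3 ∧ ∀ x ∈ l, x ∈ SymS g K}) := by
    intro r' hr'
    refine ⟨(r'.input, r'.output), ⟨?_, ?_, ?_⟩, rfl⟩
    · -- input is bounded
      cases hr' with
      | r1 hr hu hv => exact mem_tri hu ⟨_, hr, Or.inr rfl⟩ hv
      | r2 => exact mem_chain (by simp) (Or.inl rfl) (by simp)
      | r3 hu hv hs => exact mem_chain hu hs hv
      | r4 hb hv hs => exact mem_chain (by simp) hs hv
      | r5 hv hs => exact mem_chain (by simp) hs hv
      | r6 hb hu hv hs => exact mem_chain hu hs hv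
      | r7 hu hv hs => exact mem_chain hu hs hv
      | r8 hu hv hs => exact mem_chain hu hs hv
      | r9 hr hu => exact mem_etri hu ⟨_, hr, Or.inr rfl⟩
      | r10 => exact mem_echain (by simp) (Or.inl rfl)
      | r11 hu hs => exact mem_echain hu hs
      | r12 hu hs => exact mem_echain hu hs
    · -- output length
      cases hr' <;> simp
    · -- output symbols bounded
      cases hr' with
      | r1 hr hu hv =>
        intro x hx
        simp only [List.mem_singleton] at hx
        subst hx
        exact mem_symN (mem_chain hu (mem_sufS_self hr) hv)
      | r2 => intro x hx; simp at hx
      | r3 hu hv hs =>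
        intro x hx
        simp only [List.mem_singleton] at hx
        subst hx
        exact mem_symN (mem_chain (Nat.le_of_succ_le (by simpa using hu)) (SufS_tail hs) hv)
      | r4 hb hv hs =>
        intro x hx
        simp only [List.mem_cons, List.not_mem_nil, or_false] at hx
        rcases hx with rfl | rfl
        · exact mem_symT
        · rename_i a c v s b
          have hc : c.length ≤ K := by
            have := hK b
            rw [hb] at this
            simpa using Nat.le_of_succ_le (by simpa using this)
          exact mem_symN (mem_chain hc (SufS_tail hs) hv)
      | r5 hv hs =>
        intro x hx
        simp only [List.mem_singleton] at hx
        subst hx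
        exact mem_symN (mem_echain (Nat.le_of_succ_le (by simpa using hv)) (SufS_tail hs))
      | r6 hb hu hv hs =>
        intro x hx
        simp only [List.mem_cons, List.not_mem_nil, or_false] at hx
        rename_i u v c₁ c₂ B s b
        have hc : c₁.length ≤ K ∧ c₂.length ≤ K := by
          have := hK b
          rw [hb] at this
          simp at this
          omega
        rcases hx with rfl | rfl | rfl
        · exact mem_symN (mem_tri hu (ntS_of_sufS hs) hc.1)
        · exact mem_symT
        · exact mem_symN (mem_chain hc.2 (SufS_tail hs) hv)
      | r7 hu hv hs =>
        intro x hx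
        simp only [List.mem_cons, List.not_mem_nil, or_false] at hx
        have hlen := hu
        simp only [List.length_append] at hlen
        rcases hx with rfl | rfl
        · exact mem_symN (mem_etri (by omega) (ntS_of_sufS hs))
        · exact mem_symN (mem_chain (by omega) (SufS_tail hs) hv)
      | r8 hu hv hs =>
        intro x hx
        simp only [List.mem_cons, List.not_mem_nil, or_false] at hx
        have hlen := hv
        simp only [List.length_append] at hlen
        rcases hx with rfl | rfl
        · exact mem_symN (mem_tri hu (ntS_of_sufS hs) (by omega))
        · exact mem_symN (mem_echain (by omega) (SufS_tail hs))
      | r9 hr hu =>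
        intro x hx
        simp only [List.mem_singleton] at hx
        subst hx
        exact mem_symN (mem_echain hu (mem_sufS_self hr))
      | r10 => intro x hx; simp at hx
      | r11 hu hs =>
        intro x hx
        simp only [List.mem_singleton] at hx
        subst hx
        exact mem_symN (mem_echain (Nat.le_of_succ_le (by simpa using hu)) (SufS_tail hs))
      | r12 hu hs =>
        intro x hx
        simp only [List.mem_cons, List.not_mem_nil, or_false] at hx
        have hlen := hu
        simp only [List.length_append] at hlen
        rcases hx with rfl | rfl
        · exact mem_symN (mem_etri (by omega) (ntS_of_sufS hs))
        · exact mem_symN (mem_echain (by omega) (SufS_tail hs))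
  exact Set.Finite.subset (((ntBounded_finite g K).prod
    (listsBounded_finite hSym 3)).image _) hbig

end Constr

section Main

variable {α β : Type} [Fintype α] [Fintype β]
variable (g : ContextFreeGrammar.{0} α) (φ : β → List α) (K : ℕ)

/-- The grammar for the inverse image of `g.language` under `star φ`. -/
@[reducible]
noncomputable def invGrammar (hK : ∀ b, (φ b).length ≤ K) : ContextFreeGrammar.{0} β :=
  ⟨NT' α g.NT, .tri [] g.initial [], (isRule_finite g φ K hK).toFinset⟩

lemma mem_invGrammar_rules {hK : ∀ b, (φ b).length ≤ K}
    {r' : ContextFreeRule β (NT' α g.NT)} :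
    r' ∈ (invGrammar g φ K hK).rules ↔ IsRule g φ K r' :=
  Set.Finite.mem_toFinset _

/-- Intended meaning of the new nonterminals. -/
def Good : NT' α g.NT → List β → Prop
  | .tri u B v, w =>
      g.Derives [Symbol.nonterminal B] ((u ++ star φ w ++ v).map Symbol.terminal)
  | .chain u s v, w => g.Derives s ((u ++ star φ w ++ v).map Symbol.terminal)
  | .etri u B, w => w = [] ∧ g.Derives [Symbol.nonterminal B] (u.map Symbol.terminal)
  | .echain u s, w => w = [] ∧ g.Derives s (u.map Symbol.terminal)

lemma derives_append3 {g : ContextFreeGrammar.{0} α} {s₁ s₂ : List (Symbol α g.NT)}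
    {x₁ x₂ : List α} (h₁ : g.Derives s₁ (x₁.map Symbol.terminal))
    (h₂ : g.Derives s₂ (x₂.map Symbol.terminal)) :
    g.Derives (s₁ ++ s₂) ((x₁ ++ x₂).map Symbol.terminal) := by
  rw [List.map_append]
  exact (h₁.append_right s₂).trans (h₂.append_left _)

lemma terminal_map_inj {γ N : Type} {w₁ w₂ : List γ}
    (h : w₁.map (Symbol.terminal (N := N)) = w₂.map Symbol.terminal) : w₁ = w₂ := by
  have : Function.Injective (Symbol.terminal (T := γ) (N := N)) := fun x y hxy => by
    injection hxy
  exact (List.map_injective_iff.mpr this) h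

theorem invGrammar_sound (hK : ∀ b, (φ b).length ≤ K) :
    ∀ (n : ℕ) (X : NT' α g.NT) (w : List β),
      DerivesIn (invGrammar g φ K hK) n [Symbol.nonterminal X] (w.map Symbol.terminal) →
      Good g φ X w := by
  intro n
  induction n using Nat.strong_induction_on with
  | _ n IH =>
  intro X w h
  obtain ⟨m, r', rfl, hrg, hin, hd⟩ := h.head_of_nonterminal
  rw [mem_invGrammar_rules g φ K] at hrg
  have hmn : m < m + 1 := Nat.lt_succ_self m
  cases hrg with
  | @r1 u v r hr hu hv =>
    subst hin
    have ih := IH m hmn _ w hd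
    simp only [Good] at ih ⊢
    exact ContextFreeGrammar.Produces.trans_derives
      ⟨_, hr, ContextFreeRule.Rewrites.input_output⟩ ih
  | r2 =>
    subst hin
    obtain ⟨hw, -⟩ := DerivesIn.terminal_eq (x := ([] : List β)) hd
    obtain rfl : w = [] := terminal_map_inj hw
    simp only [Good]
    simpa using ContextFreeGrammar.Derives.refl ([] : List (Symbol α g.NT))
  | @r3 a u v s hu hv hs =>
    subst hin
    have ih := IH m hmn _ w hd
    simp only [Good] at ih ⊢
    have := ContextFreeGrammar.Derives.append_left ih [Symbol.terminal a]
    simpa using this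
  | @r4 a c v s b hb hv hs =>
    subst hin
    dsimp only at hd
    rw [show [Symbol.terminal b, Symbol.nonterminal (NT'.chain c s v)] =
      [Symbol.terminal b] ++ [Symbol.nonterminal (NT'.chain c s v)] from rfl] at hd
    obtain ⟨w₁, w₂, n₁, n₂, rfl, hn, hd₁, hd₂⟩ := DerivesIn.split hd
    obtain ⟨hw₁, -⟩ := DerivesIn.terminal_eq (x := [b]) hd₁
    obtain rfl : w₁ = [b] := terminal_map_inj hw₁
    have ih := IH n₂ (by omega) _ w₂ hd₂
    simp only [Good] at ih ⊢
    have := ContextFreeGrammar.Derives.append_left ih [Symbol.terminal a]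
    rw [show star φ ([b] ++ w₂) = φ b ++ star φ w₂ by simp, hb]
    simpa using this
  | @r5 a v s hv hs =>
    subst hin
    obtain ⟨rfl, ih⟩ := IH m hmn _ w hd
    simp only [Good]
    have := ContextFreeGrammar.Derives.append_left ih [Symbol.terminal a]
    simpa using this
  | @r6 u v c₁ c₂ B s b hb hu hv hs =>
    subst hin
    dsimp only at hd
    rw [show [Symbol.nonterminal (NT'.tri u B c₁), Symbol.terminal b,
        Symbol.nonterminal (NT'.chain c₂ s v)] =
      [Symbol.nonterminal (NT'.tri u B c₁)] ++ ([Symbol.terminal b] ++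
        [Symbol.nonterminal (NT'.chain c₂ s v)]) from rfl] at hd
    obtain ⟨w₁, w₂', n₁, n₂', rfl, hn, hd₁, hd₂⟩ := DerivesIn.split hd
    obtain ⟨wm, w₂, m₁, m₂, rfl, hm, hdm, hd₃⟩ := DerivesIn.split hd₂
    obtain ⟨hwm, -⟩ := DerivesIn.terminal_eq (x := [b]) hdm
    obtain rfl : wm = [b] := terminal_map_inj hwm
    have ih₁ := IH n₁ (by omega) _ w₁ hd₁
    have ih₂ := IH m₂ (by omega) _ w₂ hd₃
    simp only [Good] at ih₁ ih₂ ⊢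
    have hcomb := derives_append3 ih₁ ih₂
    have heq : (u ++ star φ w₁ ++ c₁) ++ (c₂ ++ star φ w₂ ++ v) =
        u ++ star φ (w₁ ++ [b] ++ w₂) ++ v := by
      simp [hb, List.append_assoc]
    rw [heq] at hcomb
    simpa [List.append_assoc] using hcomb
  | @r7 u₁ u₂ v B s hu hv hs =>
    subst hin
    dsimp only at hd
    rw [show [Symbol.nonterminal (NT'.etri u₁ B), Symbol.nonterminal (NT'.chain u₂ s v)] =
      [Symbol.nonterminal (NT'.etri u₁ B)] ++ [Symbol.nonterminal (NT'.chain u₂ s v)]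
      from rfl] at hd
    obtain ⟨w₁, w₂, n₁, n₂, rfl, hn, hd₁, hd₂⟩ := DerivesIn.split hd
    obtain ⟨rfl, ih₁⟩ := IH n₁ (by omega) _ w₁ hd₁
    have ih₂ := IH n₂ (by omega) _ w₂ hd₂
    simp only [Good] at ih₂ ⊢
    have hcomb := derives_append3 ih₁ ih₂
    simpa [List.append_assoc] using hcomb
  | @r8 u v₁ v₂ B s hu hv hs =>
    subst hin
    dsimp only at hd
    rw [show [Symbol.nonterminal (NT'.tri u B v₁), Symbol.nonterminal (NT'.echain v₂ s)] =
      [Symbol.nonterminal (NT'.tri u B v₁)] ++ [Symbol.nonterminal (NT'.echain v₂ s)]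
      from rfl] at hd
    obtain ⟨w₁, w₂, n₁, n₂, rfl, hn, hd₁, hd₂⟩ := DerivesIn.split hd
    have ih₁ := IH n₁ (by omega) _ w₁ hd₁
    obtain ⟨rfl, ih₂⟩ := IH n₂ (by omega) _ w₂ hd₂
    simp only [Good] at ih₁ ⊢
    have hcomb := derives_append3 ih₁ ih₂
    simpa [List.append_assoc] using hcomb
  | @r9 u r hr hu =>
    subst hin
    obtain ⟨rfl, ih⟩ := IH m hmn _ w hd
    exact ⟨rfl, ContextFreeGrammar.Produces.trans_derives
      ⟨_, hr, ContextFreeRule.Rewrites.input_output⟩ ih⟩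
  | r10 =>
    subst hin
    obtain ⟨hw, -⟩ := DerivesIn.terminal_eq (x := ([] : List β)) hd
    obtain rfl : w = [] := terminal_map_inj hw
    exact ⟨rfl, by
      show g.Derives [] _
      simpa using ContextFreeGrammar.Derives.refl ([] : List (Symbol α g.NT))⟩
  | @r11 a u s hu hs =>
    subst hin
    obtain ⟨rfl, ih⟩ := IH m hmn _ w hd
    refine ⟨rfl, ?_⟩
    have := ContextFreeGrammar.Derives.append_left ih [Symbol.terminal a]
    simpa using this
  | @r12 u₁ u₂ B s hu hs =>
    subst hin
    dsimp only at hd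
    rw [show [Symbol.nonterminal (NT'.etri u₁ B), Symbol.nonterminal (NT'.echain u₂ s)] =
      [Symbol.nonterminal (NT'.etri u₁ B)] ++ [Symbol.nonterminal (NT'.echain u₂ s)]
      from rfl] at hd
    obtain ⟨w₁, w₂, n₁, n₂, rfl, hn, hd₁, hd₂⟩ := DerivesIn.split hd
    obtain ⟨rfl, ih₁⟩ := IH n₁ (by omega) _ w₁ hd₁
    obtain ⟨rfl, ih₂⟩ := IH n₂ (by omega) _ w₂ hd₂
    exact ⟨rfl, derives_append3 ih₁ ih₂⟩

lemma cut_aux (φ : β → List α) : ∀ (w : List β) (c x₂ v : List α),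
    star φ w ++ v = c ++ x₂ →
    (∃ w₁ b w₂ c₁ c₂, w = w₁ ++ b :: w₂ ∧ φ b = c₁ ++ c₂ ∧
      c = star φ w₁ ++ c₁ ∧ x₂ = c₂ ++ star φ w₂ ++ v) ∨
    (∃ v₁ v₂, v = v₁ ++ v₂ ∧ c = star φ w ++ v₁ ∧ x₂ = v₂) := by
  intro w
  induction w with
  | nil =>
    intro c x₂ v h
    right
    exact ⟨c, x₂, by simpa using h, by simp, rfl⟩
  | cons b w ih =>
    intro c x₂ v h
    rw [star_cons, List.append_assoc] at h
    rcases List.append_eq_append_iff.mp h with ⟨a, ha1, ha2⟩ | ⟨c', hc1, hc2⟩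
    · rcases ih a x₂ v ha2 with ⟨w₁, b', w₂, c₁, c₂, hw, hb, hc, hx⟩ | ⟨v₁, v₂, hv, hc, hx⟩
      · refine Or.inl ⟨b :: w₁, b', w₂, c₁, c₂, by simp [hw], hb, ?_, hx⟩
        simp [ha1, hc, List.append_assoc]
      · refine Or.inr ⟨v₁, v₂, hv, ?_, hx⟩
        simp [ha1, hc, List.append_assoc]
    · refine Or.inl ⟨[], b, w, c, c', by simp, hc1, by simp, ?_⟩
      simp [hc2, List.append_assoc]

lemma cut (φ : β → List α) {u v x₁ x₂ : List α} {w : List β}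
    (h : u ++ star φ w ++ v = x₁ ++ x₂) :
    (∃ u₂, u = x₁ ++ u₂ ∧ x₂ = u₂ ++ star φ w ++ v) ∨
    (∃ w₁ b w₂ c₁ c₂, w = w₁ ++ b :: w₂ ∧ φ b = c₁ ++ c₂ ∧
      x₁ = u ++ star φ w₁ ++ c₁ ∧ x₂ = c₂ ++ star φ w₂ ++ v) ∨
    (∃ v₁ v₂, v = v₁ ++ v₂ ∧ x₁ = u ++ star φ w ++ v₁ ∧ x₂ = v₂) := by
  rw [List.append_assoc] at h
  rcases List.append_eq_append_iff.mp h with ⟨a, ha1, ha2⟩ | ⟨c', hc1, hc2⟩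
  · rcases cut_aux φ w a x₂ v ha2 with ⟨w₁, b, w₂, c₁, c₂, hw, hb, hc, hx⟩ | ⟨v₁, v₂, hv, hc, hx⟩
    · exact Or.inr (Or.inl ⟨w₁, b, w₂, c₁, c₂, hw, hb,
        by simp [ha1, hc, List.append_assoc], hx⟩)
    · exact Or.inr (Or.inr ⟨v₁, v₂, hv, by simp [ha1, hc, List.append_assoc], hx⟩)
  · exact Or.inl ⟨c', hc1, by simp [hc2, List.append_assoc]⟩

lemma produces_of_isRule (hK : ∀ b, (φ b).length ≤ K) {X : NT' α g.NT}
    {out : List (Symbol β (NT' α g.NT))} (h : IsRule g φ K ⟨X, out⟩) :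
    (invGrammar g φ K hK).Produces [Symbol.nonterminal X] out :=
  ⟨⟨X, out⟩, (mem_invGrammar_rules g φ K).mpr h, ContextFreeRule.Rewrites.input_output⟩

theorem invGrammar_complete (hφ : ∀ b, φ b ≠ []) (hK : ∀ b, (φ b).length ≤ K) : ∀ n : ℕ,
    (∀ (B : g.NT) (u v : List α) (w : List β),
      DerivesIn g n [Symbol.nonterminal B] ((u ++ star φ w ++ v).map Symbol.terminal) →
      u.length ≤ K → v.length ≤ K →
      (invGrammar g φ K hK).Derives [Symbol.nonterminal (NT'.tri u B v)]
        (w.map Symbol.terminal)) ∧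
    (∀ (B : g.NT) (u : List α),
      DerivesIn g n [Symbol.nonterminal B] (u.map Symbol.terminal) → u.length ≤ K →
      (invGrammar g φ K hK).Derives [Symbol.nonterminal (NT'.etri u B)] []) ∧
    (∀ (s : List (Symbol α g.NT)) (u v : List α) (w : List β), s ∈ SufS g →
      DerivesIn g n s ((u ++ star φ w ++ v).map Symbol.terminal) →
      u.length ≤ K → v.length ≤ K →
      (invGrammar g φ K hK).Derives [Symbol.nonterminal (NT'.chain u s v)]
        (w.map Symbol.terminal)) ∧
    (∀ (s : List (Symbol α g.NT)) (u : List α), s ∈ SufS g →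
      DerivesIn g n s (u.map Symbol.terminal) → u.length ≤ K →
      (invGrammar g φ K hK).Derives [Symbol.nonterminal (NT'.echain u s)] []) := by
  intro n
  induction n using Nat.strong_induction_on with
  | _ n IH =>
  have htri : ∀ (B : g.NT) (u v : List α) (w : List β),
      DerivesIn g n [Symbol.nonterminal B] ((u ++ star φ w ++ v).map Symbol.terminal) →
      u.length ≤ K → v.length ≤ K →
      (invGrammar g φ K hK).Derives [Symbol.nonterminal (NT'.tri u B v)]
        (w.map Symbol.terminal) := by
    intro B u v w h hu hv
    obtain ⟨m, r, hn, hr, hin, hd⟩ := h.head_of_nonterminal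
    subst hin
    have child := (IH m (by omega)).2.2.1 r.output u v w (mem_sufS_self hr) hd hu hv
    exact (produces_of_isRule g φ K hK (IsRule.r1 hr hu hv)).trans_derives child
  have hetri : ∀ (B : g.NT) (u : List α),
      DerivesIn g n [Symbol.nonterminal B] (u.map Symbol.terminal) → u.length ≤ K →
      (invGrammar g φ K hK).Derives [Symbol.nonterminal (NT'.etri u B)] [] := by
    intro B u h hu
    obtain ⟨m, r, hn, hr, hin, hd⟩ := h.head_of_nonterminal
    subst hin
    have child := (IH m (by omega)).2.2.2 r.output u (mem_sufS_self hr) hd hu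
    exact (produces_of_isRule g φ K hK (IsRule.r9 hr hu)).trans_derives child
  have tri_le : ∀ m, m ≤ n → ∀ (B : g.NT) (u v : List α) (w : List β),
      DerivesIn g m [Symbol.nonterminal B] ((u ++ star φ w ++ v).map Symbol.terminal) →
      u.length ≤ K → v.length ≤ K →
      (invGrammar g φ K hK).Derives [Symbol.nonterminal (NT'.tri u B v)]
        (w.map Symbol.terminal) := by
    intro m hm
    rcases eq_or_lt_of_le hm with rfl | hlt
    · exact htri
    · exact (IH m hlt).1
  have etri_le : ∀ m, m ≤ n → ∀ (B : g.NT) (u : List α),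
      DerivesIn g m [Symbol.nonterminal B] (u.map Symbol.terminal) → u.length ≤ K →
      (invGrammar g φ K hK).Derives [Symbol.nonterminal (NT'.etri u B)] [] := by
    intro m hm
    rcases eq_or_lt_of_le hm with rfl | hlt
    · exact hetri
    · exact (IH m hlt).2.1
  have key : ∀ s : List (Symbol α g.NT),
      (∀ m, m ≤ n → ∀ (u v : List α) (w : List β), s ∈ SufS g →
        DerivesIn g m s ((u ++ star φ w ++ v).map Symbol.terminal) →
        u.length ≤ K → v.length ≤ K →
        (invGrammar g φ K hK).Derives [Symbol.nonterminal (NT'.chain u s v)]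
          (w.map Symbol.terminal)) ∧
      (∀ m, m ≤ n → ∀ (u : List α), s ∈ SufS g →
        DerivesIn g m s (u.map Symbol.terminal) → u.length ≤ K →
        (invGrammar g φ K hK).Derives [Symbol.nonterminal (NT'.echain u s)] []) := by
    intro s
    induction s with
    | nil =>
      constructor
      · intro m hm u v w hsS h hu hv
        obtain ⟨heq, -⟩ := DerivesIn.terminal_eq (x := ([] : List α)) h
        have h0 : u ++ star φ w ++ v = [] := terminal_map_inj heq
        simp only [List.append_eq_nil_iff] at h0
        obtain ⟨⟨rfl, hsw⟩, rfl⟩ := h0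
        obtain rfl : w = [] := star_eq_nil hφ hsw
        simpa using (produces_of_isRule g φ K hK IsRule.r2).single
      · intro m hm u hsS h hu
        obtain ⟨heq, -⟩ := DerivesIn.terminal_eq (x := ([] : List α)) h
        obtain rfl : u = [] := terminal_map_inj heq
        simpa using (produces_of_isRule g φ K hK IsRule.r10).single
    | cons X s ihs =>
      constructor
      · intro m hm u v w hsS h hu hv
        rw [show (X :: s) = [X] ++ s from rfl] at h
        obtain ⟨x₁, x₂, n₁, n₂, hx, hnn, hd₁, hd₂⟩ := h.split
        cases X with
        | terminal a =>
          obtain ⟨hx₁, hn₁0⟩ := DerivesIn.terminal_eq (x := [a]) hd₁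
          obtain rfl : x₁ = [a] := terminal_map_inj hx₁
          cases u with
          | cons a' u₂ =>
            rw [List.cons_append, List.cons_append, List.singleton_append] at hx
            obtain ⟨rfl, hx'⟩ : a' = a ∧ u₂ ++ star φ w ++ v = x₂ :=
              ⟨List.head_eq_of_cons_eq hx, List.tail_eq_of_cons_eq hx⟩
            have child := (ihs.1) n₂ (le_trans (by omega) hm) u₂ v w (SufS_tail hsS)
              (hx' ▸ hd₂) (Nat.le_of_succ_le (by simpa using hu)) hv
            exact (produces_of_isRule g φ K hK (IsRule.r3 hu hv hsS)).trans_derives child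
          | nil =>
            cases w with
            | cons b w₂ =>
              rcases hφb : φ b with _ | ⟨a', c⟩
              · exact absurd hφb (hφ b)
              · rw [List.nil_append, star_cons, hφb, List.singleton_append,
                  List.cons_append, List.cons_append] at hx
                obtain ⟨rfl, hx'⟩ : a' = a ∧ c ++ star φ w₂ ++ v = x₂ :=
                  ⟨List.head_eq_of_cons_eq hx, by
                    have := List.tail_eq_of_cons_eq hx
                    simpa [List.append_assoc] using this⟩
                have hc : c.length ≤ K := by
                  have := hK b
                  rw [hφb] at this
                  simp at this
                  omega
                have child := (ihs.1) n₂ (le_trans (by omega) hm) c v w₂ (SufS_tail hsS)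
                  (hx' ▸ hd₂) hc hv
                refine (produces_of_isRule g φ K hK (IsRule.r4 hφb hv hsS)).trans_derives ?_
                have := child.append_left [Symbol.terminal b]
                simpa using this
            | nil =>
              simp only [List.nil_append, star_nil, List.singleton_append] at hx
              subst hx
              have child := (ihs.2) n₂ (le_trans (by omega) hm) x₂ (SufS_tail hsS)
                hd₂ (Nat.le_of_succ_le (by simpa using hv))
              have step := produces_of_isRule g φ K hK (IsRule.r5 hv hsS)
              exact step.trans_derives (by simpa using child)
        | nonterminal B =>
          rcases cut φ hx with ⟨u₂, rfl, hx₂⟩ |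
            ⟨w₁, b, w₂, c₁, c₂, rfl, hb, hx₁, hx₂⟩ | ⟨v₁, v₂, rfl, hx₁, hx₂⟩
          · -- cut inside u
            have hxlen : x₁.length ≤ K := by
              have := hu
              simp only [List.length_append] at this
              omega
            have child₁ := etri_le n₁ (le_trans (by omega) hm) B x₁ hd₁ hxlen
            have child₂ := (ihs.1) n₂ (le_trans (by omega) hm) u₂ v w (SufS_tail hsS)
              (hx₂ ▸ hd₂) (by have := hu; simp only [List.length_append] at this; omega) hv
            refine (produces_of_isRule g φ K hK (IsRule.r7 hu hv hsS)).trans_derives ?_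
            have c₁' : (invGrammar g φ K hK).Derives [Symbol.nonterminal (NT'.etri x₁ B)]
                (([] : List β).map Symbol.terminal) := by simpa using child₁
            have := derives_append3 c₁' child₂
            simpa using this
          · -- cut inside a block
            have hc₁ : c₁.length ≤ K := by
              have := hK b; rw [hb] at this; simp only [List.length_append] at this; omega
            have hc₂ : c₂.length ≤ K := by
              have := hK b; rw [hb] at this; simp only [List.length_append] at this; omega
            have child₁ := tri_le n₁ (le_trans (by omega) hm) B u c₁ w₁ (hx₁ ▸ hd₁) hu hc₁
            have child₂ := (ihs.1) n₂ (le_trans (by omega) hm) c₂ v w₂ (SufS_tail hsS)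
              (hx₂ ▸ hd₂) hc₂ hv
            refine (produces_of_isRule g φ K hK (IsRule.r6 hb hu hv hsS)).trans_derives ?_
            have hmid : (invGrammar g φ K hK).Derives [Symbol.terminal b]
                (([b] : List β).map Symbol.terminal) := ContextFreeGrammar.Derives.refl _
            have := derives_append3 child₁ (derives_append3 hmid child₂)
            simpa [List.append_assoc] using this
          · -- cut inside v
            have hv₁ : v₁.length ≤ K := by
              have := hv; simp only [List.length_append] at this; omega
            have hv₂ : v₂.length ≤ K := by
              have := hv; simp only [List.length_append] at this; omega
            have child₁ := tri_le n₁ (le_trans (by omega) hm) B u v₁ w (hx₁ ▸ hd₁) hu hv₁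
            have child₂ := (ihs.2) n₂ (le_trans (by omega) hm) v₂ (SufS_tail hsS)
              (hx₂ ▸ hd₂) hv₂
            refine (produces_of_isRule g φ K hK (IsRule.r8 hu hv hsS)).trans_derives ?_
            have c₂' : (invGrammar g φ K hK).Derives [Symbol.nonterminal (NT'.echain v₂ s)]
                (([] : List β).map Symbol.terminal) := by simpa using child₂
            have := derives_append3 child₁ c₂'
            simpa using this
      · intro m hm u hsS h hu
        rw [show (X :: s) = [X] ++ s from rfl] at h
        obtain ⟨x₁, x₂, n₁, n₂, hx, hnn, hd₁, hd₂⟩ := h.split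
        cases X with
        | terminal a =>
          obtain ⟨hx₁, hn₁0⟩ := DerivesIn.terminal_eq (x := [a]) hd₁
          obtain rfl : x₁ = [a] := terminal_map_inj hx₁
          subst hx
          have child := (ihs.2) n₂ (le_trans (by omega) hm) x₂ (SufS_tail hsS) hd₂
            (Nat.le_of_succ_le (by simpa using hu))
          exact (produces_of_isRule g φ K hK
            (IsRule.r11 (by simpa using hu) hsS)).trans_derives child
        | nonterminal B =>
          subst hx
          have hl := hu
          simp only [List.length_append] at hl
          have child₁ := etri_le n₁ (le_trans (by omega) hm) B x₁ hd₁ (by omega)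
          have child₂ := (ihs.2) n₂ (le_trans (by omega) hm) x₂ (SufS_tail hsS) hd₂ (by omega)
          refine (produces_of_isRule g φ K hK (IsRule.r12 hu hsS)).trans_derives ?_
          have c₁' : (invGrammar g φ K hK).Derives [Symbol.nonterminal (NT'.etri x₁ B)]
              (([] : List β).map Symbol.terminal) := by simpa using child₁
          have c₂' : (invGrammar g φ K hK).Derives [Symbol.nonterminal (NT'.echain x₂ s)]
              (([] : List β).map Symbol.terminal) := by simpa using child₂
          have := derives_append3 c₁' c₂'
          simpa using this
  exact ⟨htri, hetri,
    fun s u v w hsS h hu hv => (key s).1 n le_rfl u v w hsS h hu hv,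
    fun s u hsS h hu => (key s).2 n le_rfl u hsS h hu⟩

theorem invGrammar_language (hφ : ∀ b, φ b ≠ []) (hK : ∀ b, (φ b).length ≤ K) :
    (invGrammar g φ K hK).language = {w : List β | star φ w ∈ g.language} := by
  ext w
  constructor
  · intro h
    obtain ⟨n, hn⟩ := Derives.toDerivesIn h
    have hs := invGrammar_sound g φ K hK n (NT'.tri [] g.initial []) w hn
    simp only [Good] at hs
    show g.Generates _
    simpa [ContextFreeGrammar.Generates] using hs
  · intro h
    obtain ⟨n, hn⟩ := Derives.toDerivesIn (h : g.Generates _)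
    exact (invGrammar_complete g φ K hφ hK n).1 g.initial [] [] w (by simpa using hn)
      (by simp) (by simp)

/-- A language with no members is context-free. -/
lemma empty_isContextFree (L : Language β) (hL : ∀ w, w ∉ L) : L.IsContextFree := by
  refine ⟨⟨PUnit, PUnit.unit, ∅⟩, ?_⟩
  ext w
  simp only [ContextFreeGrammar.mem_language_iff]
  constructor
  · intro h
    exfalso
    rcases h.eq_or_head with heq | ⟨v, ⟨r, hr, -⟩, -⟩
    · have hmem : Symbol.nonterminal PUnit.unit ∈
          List.map (Symbol.terminal (N := PUnit)) w := by
        rw [← heq]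
        exact List.mem_singleton_self _
      simp only [List.mem_map] at hmem
      obtain ⟨t, -, ht⟩ := hmem
      cases ht
    · simp at hr
  · intro h
    exact absurd h (hL w)

end Main

end CoCFProof

/-- If a finitely generated group `G` has context-free co-word problem, then so does every
finitely generated subgroup `H` of `G` (with respect to any symmetric finite generating
set). -/
theorem coCF_subgroup {G : Type*} [Group G] {α : Type} [Fintype α] (f : α → G)
    (hsym : (Set.range f)⁻¹ = Set.range f)
    (hgen : Subgroup.closure (Set.range f) = ⊤)
    (hcf : Language.IsContextFree ({w : List α | (w.map f).prod ≠ 1} : Language α))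
    (H : Subgroup G) {β : Type} [Fintype β] (g : β → H)
    (hsymb : (Set.range g)⁻¹ = Set.range g)
    (hgenb : Subgroup.closure (Set.range g) = ⊤) :
    Language.IsContextFree ({w : List β | (w.map g).prod ≠ 1} : Language β) := by
  classical
  rcases isEmpty_or_nonempty α with hα | hα
  · -- `G` is trivial, hence the co-word problem of `H` is empty
    have hGtriv : ∀ x : G, x = 1 := by
      have hr : Set.range f = ∅ := Set.range_eq_empty f
      rw [hr, Subgroup.closure_empty] at hgen
      intro x
      have hx : x ∈ (⊥ : Subgroup G) := by rw [hgen]; trivial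
      simpa [Subgroup.mem_bot] using hx
    refine CoCFProof.empty_isContextFree _ ?_
    intro w hw
    apply hw
    have hco : ((w.map g).prod : G) = 1 := hGtriv _
    exact OneMemClass.coe_eq_one.mp hco
  · obtain ⟨a₀⟩ := hα
    have hinv : ∀ a : α, ∃ a' : α, f a' = (f a)⁻¹ := by
      intro a
      have h1 : (f a)⁻¹ ∈ (Set.range f)⁻¹ := by
        rw [Set.mem_inv]
        simpa using Set.mem_range_self a
      rw [hsym] at h1
      exact h1
    choose inv' hinv' using hinv
    have inv_word : ∀ l : List α, ((l.reverse.map inv').map f).prod = ((l.map f).prod)⁻¹ := by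
      intro l
      induction l with
      | nil => simp
      | cons a l ih =>
        rw [List.reverse_cons, List.map_append, List.map_append, List.prod_append, ih]
        simp [hinv', mul_inv_rev]
    have rep : ∀ x : G, ∃ l : List α, (l.map f).prod = x := by
      intro x
      have hx : x ∈ Subgroup.closure (Set.range f) := by rw [hgen]; trivial
      induction hx using Subgroup.closure_induction with
      | mem y hy => obtain ⟨a, rfl⟩ := hy; exact ⟨[a], by simp⟩
      | one => exact ⟨[], by simp⟩
      | mul y z hy hz ihy ihz =>
        obtain ⟨l₁, h₁⟩ := ihy
        obtain ⟨l₂, h₂⟩ := ihz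
        exact ⟨l₁ ++ l₂, by simp [h₁, h₂]⟩
      | inv y hy ihy =>
        obtain ⟨l, hl⟩ := ihy
        exact ⟨l.reverse.map inv', by rw [inv_word, hl]⟩
    choose rep' hrep' using rep
    set φ : β → List α := fun b => rep' ((g b : G)) ++ [a₀, inv' a₀] with hφdef
    have hφne : ∀ b, φ b ≠ [] := by intro b; simp [hφdef]
    have hφprod : ∀ b, ((φ b).map f).prod = (g b : G) := by
      intro b
      simp [hφdef, hrep', hinv' a₀, mul_assoc]
    set K := Finset.univ.sup fun b : β => (φ b).length with hKdef
    have hK : ∀ b, (φ b).length ≤ K := fun b =>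
      Finset.le_sup (f := fun b : β => (φ b).length) (Finset.mem_univ b)
    obtain ⟨g0, hg0⟩ := hcf
    have hstar : ∀ w : List β, ((CoCFProof.star φ w).map f).prod = ((w.map g).prod : G) := by
      intro w
      induction w with
      | nil => simp [CoCFProof.star]
      | cons b w ih => simp [hφprod, ih]
    refine ⟨CoCFProof.invGrammar g0 φ K hK, ?_⟩
    rw [CoCFProof.invGrammar_language g0 φ K hφne hK, hg0]
    ext w
    show ((CoCFProof.star φ w).map f).prod ≠ 1 ↔ (w.map g).prod ≠ 1
    rw [hstar w]
    exact not_congr OneMemClass.coe_eq_one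
end
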